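/- arXiv:2303.17494 — 5 statements merged into one kernel-verified Lean document; each statement's English description precedes it below -/
import Mathlib

section
/- Given functions f(λ,k) and g(k,μ), a countable index set S, and numbers λ_1,...,λ_N and μ_1,...,μ_N, the Andreief (Cauchy–Binet type) identity holds: the sum over all strictly increasing N-tuples k_1<...<k_N from S of det_{i,j}[f(λ_i,k_j)]·det_{i,j}[g(k_i,μ_j)] equals det_{i,j}[∑_{k∈S} f(λ_i,k)g(k,μ_j)], assuming absolute summability. -/
set_option maxHeartbeats 1000000

open scoped BigOperators

open Function Equiv

/-- Product of `N` absolutely convergent sums as a sum over tuples. -/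
private lemma andreief_prod_aux {S : Type*} [Countable S] :
    ∀ (N : ℕ) (a : Fin N → S → ℂ), (∀ i, Summable fun k => ‖a i k‖) →
      Summable (fun k : Fin N → S => ‖∏ i, a i (k i)‖) ∧
      ∑' k : Fin N → S, ∏ i, a i (k i) = ∏ i, ∑' k, a i k := by
  intro N
  induction N with
  | zero =>
    intro a _
    refine ⟨Summable.of_finite, ?_⟩
    have : ∀ k : Fin 0 → S, ∏ i, a i (k i) = 1 := fun k => Finset.prod_of_isEmpty _
    simp only [this, Finset.univ_eq_empty, Finset.prod_empty]
    exact tsum_eq_single (fun i => i.elim0) (fun b hb =>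
      absurd (Subsingleton.elim b _) hb)
  | succ n ih =>
    intro a ha
    set e : (S × (Fin n → S)) ≃ (Fin (n + 1) → S) := Fin.consEquiv fun _ => S with he
    have hx : Summable fun k : S => ‖a 0 k‖ := ha 0
    obtain ⟨hy, hty⟩ := ih (fun i => a i.succ) (fun i => ha i.succ)
    have hprod : ∀ p : S × (Fin n → S),
        ∏ i, a i (e p i) = a 0 p.1 * ∏ i : Fin n, a i.succ (p.2 i) := by
      intro p
      rw [Fin.prod_univ_succ]
      simp [he, Fin.consEquiv]
    have hs : Summable fun p : S × (Fin n → S) =>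
        ‖a 0 p.1 * ∏ i : Fin n, a i.succ (p.2 i)‖ :=
      Summable.mul_norm (R := ℂ) (f := a 0)
        (g := fun y : Fin n → S => ∏ i : Fin n, a i.succ (y i)) hx hy
    constructor
    · rw [← e.summable_iff]
      refine hs.congr fun p => ?_
      simp only [Function.comp_apply, hprod p]
    · rw [← e.tsum_eq]
      calc ∑' p : S × (Fin n → S), ∏ i, a i (e p i)
          = ∑' p : S × (Fin n → S), a 0 p.1 * ∏ i : Fin n, a i.succ (p.2 i) :=
            tsum_congr hprod
        _ = (∑' k, a 0 k) * ∑' y : Fin n → S, ∏ i : Fin n, a i.succ (y i) :=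
            (tsum_mul_tsum_of_summable_norm hx hy).symm
        _ = ∏ i, ∑' k, a i k := by rw [hty, ← Fin.prod_univ_succ (fun i => ∑' k, a i k)]

/-- Decomposition of injective tuples as a strictly monotone tuple plus a permutation. -/
private noncomputable def andreief_equiv {S : Type*} [LinearOrder S] {N : ℕ} :
    ({m : Fin N → S // StrictMono m} × Equiv.Perm (Fin N)) ≃
      {k : Fin N → S // Function.Injective k} :=
  Equiv.ofBijective
    (fun p => ⟨p.1.1 ∘ p.2, p.1.2.injective.comp p.2.injective⟩)
    ⟨by
      rintro ⟨⟨m, hm⟩, σ⟩ ⟨⟨m', hm'⟩, σ'⟩ hE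
      have h : ∀ i, m (σ i) = m' (σ' i) := fun i =>
        congrFun (congrArg Subtype.val hE) i
      set τ : Equiv.Perm (Fin N) := σ'.symm.trans σ with hτ
      have hmm : ∀ j, m' j = m (τ j) := by
        intro j
        have := h (σ'.symm j)
        simpa [hτ] using this.symm
      have hτmono : StrictMono ⇑τ := by
        intro j j' hj
        have h2 : m (τ j) < m (τ j') := by rw [← hmm, ← hmm]; exact hm' hj
        exact hm.lt_iff_lt.mp h2
      have inst : WellFoundedLT (Fin N) := inferInstance
      have hτid : ⇑τ = id :=
        (@StrictMono.range_inj (Fin N) (Fin N) _ _ inst ⇑τ id hτmono strictMono_id).mp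
          (by rw [Set.range_id, Set.range_eq_univ.mpr τ.surjective])
      have hm'm : m' = m := by
        funext j; rw [hmm j, hτid]; rfl
      have hσ : σ = σ' := Equiv.ext fun i => hm.injective (by rw [h i, hm'm])
      subst hm'm hσ
      rfl,
     by
      rintro ⟨k, hk⟩
      refine ⟨⟨⟨k ∘ Tuple.sort k,
        (Tuple.monotone_sort k).strictMono_of_injective
          (hk.comp (Tuple.sort k).injective)⟩, (Tuple.sort k)⁻¹⟩, ?_⟩
      apply Subtype.ext
      funext i
      simp [Function.comp]⟩

/-- Andreief (Cauchy–Binet type) identity: the sum over strictly increasing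
`N`-tuples `k : Fin N → S` of products of determinants equals the determinant
of the matrix of sums. -/
theorem stmt0 {S : Type*} [LinearOrder S] [Countable S] {N : ℕ}
    (f : ℂ → S → ℂ) (g : S → ℂ → ℂ) (Λ M : Fin N → ℂ)
    (h1 : ∀ i j : Fin N, Summable (fun k : S => ‖f (Λ i) k * g k (M j)‖))
    (h2 : Summable (fun k : {k : Fin N → S // StrictMono k} =>
      Matrix.det (Matrix.of fun i j => f (Λ i) (k.1 j)) *
        Matrix.det (Matrix.of fun i j => g (k.1 i) (M j)))) :
    ∑' k : {k : Fin N → S // StrictMono k},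
        Matrix.det (Matrix.of fun i j => f (Λ i) (k.1 j)) *
          Matrix.det (Matrix.of fun i j => g (k.1 i) (M j))
      = Matrix.det (Matrix.of fun i j => ∑' k : S, f (Λ i) k * g k (M j)) := by
  classical
  have key := fun σ : Equiv.Perm (Fin N) =>
    andreief_prod_aux N (fun i k => f (Λ (σ i)) k * g k (M i)) (fun i => h1 (σ i) i)
  set T : Equiv.Perm (Fin N) → (Fin N → S) → ℂ := fun σ k =>
    ((Equiv.Perm.sign σ : ℤ) : ℂ) * ∏ i, (f (Λ (σ i)) (k i) * g (k i) (M i)) with hT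
  have hTsum : ∀ σ, Summable (T σ) := fun σ => ((key σ).1.of_norm).mul_left _
  set hfun : (Fin N → S) → ℂ := fun k =>
    Matrix.det (Matrix.of fun i j => f (Λ i) (k j)) * ∏ i, g (k i) (M i) with hhfun
  -- RHS expansion
  have hRHS : Matrix.det (Matrix.of fun i j => ∑' k : S, f (Λ i) k * g k (M j))
      = ∑' k : Fin N → S, ∑ σ : Equiv.Perm (Fin N), T σ k := by
    rw [Matrix.det_apply', Summable.tsum_finsetSum (fun σ _ => hTsum σ)]
    refine Finset.sum_congr rfl fun σ _ => ?_
    rw [hT]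
    show ((Equiv.Perm.sign σ : ℤ) : ℂ) * ∏ i, ∑' k : S, f (Λ (σ i)) k * g k (M i) = _
    rw [← (key σ).2, ← tsum_mul_left]
  -- pointwise identification
  have hpt : ∀ k : Fin N → S, ∑ σ : Equiv.Perm (Fin N), T σ k = hfun k := by
    intro k
    show ∑ σ : Equiv.Perm (Fin N), T σ k
      = Matrix.det (Matrix.of fun i j => f (Λ i) (k j)) * ∏ i, g (k i) (M i)
    rw [Matrix.det_apply', Finset.sum_mul]
    refine Finset.sum_congr rfl fun σ _ => ?_
    show ((Equiv.Perm.sign σ : ℤ) : ℂ) * ∏ i, (f (Λ (σ i)) (k i) * g (k i) (M i))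
      = (((Equiv.Perm.sign σ : ℤ) : ℂ) * ∏ i, f (Λ (σ i)) (k i)) * ∏ i, g (k i) (M i)
    rw [Finset.prod_mul_distrib]
    ring
  have hsummable : Summable hfun :=
    (summable_sum (fun σ (_ : σ ∈ Finset.univ) => hTsum σ)).congr hpt
  have hsupp : Function.support hfun ⊆ {k : Fin N → S | Function.Injective k} := by
    intro k hk
    by_contra hni
    apply hk
    obtain ⟨i, j, hij, hne⟩ : ∃ i j, k i = k j ∧ i ≠ j := by
      simpa [Function.Injective, not_forall] using hni
    have hdet : Matrix.det (Matrix.of fun i j => f (Λ i) (k j)) = 0 :=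
      Matrix.det_zero_of_column_eq hne (fun r => by simp [hij])
    simp [hhfun, hdet]
  have hEsummable : Summable (fun p : {m : Fin N → S // StrictMono m} × Equiv.Perm (Fin N) =>
      hfun ((andreief_equiv p).1 : Fin N → S)) :=
    (andreief_equiv.summable_iff
      (f := fun k : {k : Fin N → S // Function.Injective k} => hfun k.1)).2
      (hsummable.subtype _)
  have hperm : ∀ m : {m : Fin N → S // StrictMono m},
      ∑ σ : Equiv.Perm (Fin N), hfun (m.1 ∘ σ)
        = Matrix.det (Matrix.of fun i j => f (Λ i) (m.1 j)) *
            Matrix.det (Matrix.of fun i j => g (m.1 i) (M j)) := by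
    intro m
    have hdet : ∀ σ : Equiv.Perm (Fin N),
        Matrix.det (Matrix.of fun i j => f (Λ i) ((m.1 ∘ σ) j))
          = ((Equiv.Perm.sign σ : ℤ) : ℂ) *
              Matrix.det (Matrix.of fun i j => f (Λ i) (m.1 j)) := by
      intro σ
      have h3 := Matrix.det_permute' σ (Matrix.of fun i j => f (Λ i) (m.1 j))
      rw [show ((Matrix.of fun i j => f (Λ i) (m.1 j)).submatrix id ⇑σ)
          = Matrix.of fun i j => f (Λ i) ((m.1 ∘ σ) j) from rfl] at h3
      rw [h3]
    calc ∑ σ : Equiv.Perm (Fin N), hfun (m.1 ∘ σ)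
        = Matrix.det (Matrix.of fun i j => f (Λ i) (m.1 j)) *
            ∑ σ : Equiv.Perm (Fin N),
              ((Equiv.Perm.sign σ : ℤ) : ℂ) * ∏ i, g (m.1 (σ i)) (M i) := by
          rw [Finset.mul_sum]
          refine Finset.sum_congr rfl fun σ _ => ?_
          rw [hhfun]
          show Matrix.det (Matrix.of fun i j => f (Λ i) ((m.1 ∘ σ) j)) *
              ∏ i, g ((m.1 ∘ σ) i) (M i) = _
          rw [hdet σ]
          simp only [Function.comp_apply]
          ring
      _ = Matrix.det (Matrix.of fun i j => f (Λ i) (m.1 j)) *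
            Matrix.det (Matrix.of fun i j => g (m.1 i) (M j)) := by
          rw [Matrix.det_apply' (Matrix.of fun i j => g (m.1 i) (M j))]
          rfl
  calc ∑' k : {k : Fin N → S // StrictMono k},
        Matrix.det (Matrix.of fun i j => f (Λ i) (k.1 j)) *
          Matrix.det (Matrix.of fun i j => g (k.1 i) (M j))
      = ∑' m : {m : Fin N → S // StrictMono m}, ∑ σ : Equiv.Perm (Fin N), hfun (m.1 ∘ σ) :=
        tsum_congr fun m => (hperm m).symm
    _ = ∑' m : {m : Fin N → S // StrictMono m}, ∑' σ : Equiv.Perm (Fin N), hfun (m.1 ∘ σ) :=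
        tsum_congr fun m => (tsum_fintype _).symm
    _ = ∑' p : {m : Fin N → S // StrictMono m} × Equiv.Perm (Fin N),
          hfun ((andreief_equiv p).1 : Fin N → S) :=
        (Summable.tsum_prod' hEsummable fun m => Summable.of_finite).symm
    _ = ∑' k : {k : Fin N → S // Function.Injective k}, hfun k.1 :=
        andreief_equiv.tsum_eq (fun k : {k : Fin N → S // Function.Injective k} => hfun k.1)
    _ = ∑' k : Fin N → S, hfun k := tsum_subtype_eq_of_support_subset hsupp
    _ = ∑' k : Fin N → S, ∑ σ : Equiv.Perm (Fin N), T σ k := tsum_congr fun k => (hpt k).symm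
    _ = Matrix.det (Matrix.of fun i j => ∑' k : S, f (Λ i) k * g k (M j)) := hRHS.symm
end

section
/- For a real number x and θ ∈ ℝ \ ℤ, the absolutely convergent series ∑_{m∈ℤ} e^{ix(m+θ)}/(m+θ)^2 equals (π/sin(πθ))^2 · e^{2πiθ⌊x/(2π)+1/2⌋} + (iπ/sin(πθ))·(x − 2π⌊x/(2π)+1/2⌋)·e^{2πiθ(⌊x/(2π)⌋+1/2)}. -/
open scoped BigOperators
open Complex

set_option linter.unusedVariables false
set_option linter.unusedSectionVars false
set_option linter.unusedTactic false


lemma integral_linear_mul_exp (A B c : ℂ) (hc : c ≠ 0) (a b : ℝ) :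
    ∫ t in a..b, (A + B * t) * Complex.exp (c * t) =
      ((A + B * b) / c - B / c ^ 2) * Complex.exp (c * b)
        - ((A + B * a) / c - B / c ^ 2) * Complex.exp (c * a) := by
  have key : ∀ z : ℂ, HasDerivAt (fun w : ℂ => ((A + B * w) / c - B / c ^ 2) * Complex.exp (c * w))
      ((A + B * z) * Complex.exp (c * z)) z := by
    intro z
    have h1 : HasDerivAt (fun w : ℂ => (A + B * w) / c - B / c ^ 2) (B / c) z := by
      simpa using ((((hasDerivAt_id z).const_mul B).const_add A).div_const c).sub_const (B / c ^ 2)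
    have h2 : HasDerivAt (fun w : ℂ => Complex.exp (c * w)) (Complex.exp (c * z) * c) z := by
      simpa using ((hasDerivAt_id z).const_mul c).cexp
    have := h1.mul h2
    refine this.congr_deriv ?_
    field_simp
    ring
  refine intervalIntegral.integral_eq_sub_of_hasDerivAt (fun t _ => (key t).comp_ofReal) ?_
  apply Continuous.intervalIntegrable
  continuity

section setup
variable (θ : ℝ)

noncomputable def PP : ℂ := ↑Real.pi / ↑(Real.sin (Real.pi * θ))
noncomputable def aa : ℂ := Complex.exp (↑Real.pi * ↑θ * I)
noncomputable def bb : ℂ := Complex.exp (-(↑Real.pi * ↑θ) * I)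
noncomputable def BB : ℂ := I * PP θ * aa θ
noncomputable def ff : ℝ → ℂ := fun t => (PP θ ^ 2 + BB θ * t) * Complex.exp (-(θ : ℂ) * I * t)

variable (hs : Real.sin (Real.pi * θ) ≠ 0)

lemma hab : aa θ * bb θ = 1 := by
  rw [aa, bb, ← Complex.exp_add]; simp

lemma hsc : ((Real.sin (Real.pi * θ) : ℝ) : ℂ) = (bb θ - aa θ) * I / 2 := by
  rw [bb, aa]; push_cast [Complex.sin]; ring_nf

include hs

lemma hPs : PP θ * ↑(Real.sin (Real.pi * θ)) = ↑Real.pi := by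
  rw [PP]; exact div_mul_cancel₀ _ (Complex.ofReal_ne_zero.mpr hs)

lemma key0 : ((Real.sin (Real.pi * θ) : ℝ) : ℂ) * (2 * I * aa θ) = aa θ ^ 2 - 1 := by
  rw [hsc]
  linear_combination ((bb θ - aa θ) * aa θ) * Complex.I_sq - hab θ

lemma keyId : PP θ ^ 2 * (aa θ ^ 2 - 1) = 2 * ↑Real.pi * BB θ := by
  rw [BB]
  linear_combination (-(PP θ ^2)) * key0 θ hs + (2 * I * aa θ * PP θ) * hPs θ hs

lemma e2 : aa θ ^ 2 * bb θ ^ 2 = 1 := by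
  linear_combination (aa θ * bb θ + 1) * hab θ

lemma e1 : PP θ ^ 2 + BB θ * (2 * ↑Real.pi) = PP θ ^ 2 * aa θ ^ 2 := by
  linear_combination -keyId θ hs

lemma e3 : BB θ * (1 - bb θ ^ 2) = -(2 * ↑Real.pi) := by
  have h1 : aa θ - bb θ = 2 * ↑(Real.sin (Real.pi * θ)) * I := by
    rw [hsc]
    linear_combination (-(bb θ - aa θ)) * Complex.I_sq
  rw [BB]
  linear_combination (-(I * PP θ * bb θ)) * hab θ + (I * PP θ) * h1
    + (2 * I ^ 2) * hPs θ hs + (2 * (Real.pi : ℂ)) * Complex.I_sq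

lemma ff_cont : Continuous (ff θ) := by
  unfold ff
  fun_prop

include hs in
lemma ff_per : ff θ 0 = ff θ (0 + 2 * Real.pi) := by
  have he1 := e1 θ hs
  have he2 := e2 θ hs
  have hb2 : Complex.exp (-(θ:ℂ) * I * (((0:ℝ) + 2 * Real.pi : ℝ) : ℂ)) = bb θ ^ 2 := by
    rw [show -(θ:ℂ) * I * (((0:ℝ) + 2 * Real.pi : ℝ) : ℂ)
        = (-(↑Real.pi * ↑θ) * I) + (-(↑Real.pi * ↑θ) * I) by push_cast; ring,
      Complex.exp_add, bb, sq]
  simp only [ff]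
  rw [hb2]
  norm_num
  linear_combination (-(bb θ ^ 2)) * he1 + (-(PP θ ^ 2)) * he2

lemma summ_aux : Summable (fun n : ℤ => 1 / ((n : ℂ) + θ) ^ 2) := by
  apply Summable.of_norm
  have h := (Real.summable_one_div_int_add_rpow θ 2).mpr one_lt_two
  refine h.congr fun n => ?_
  rw [norm_div, norm_one, norm_pow, show ((n:ℂ) + θ) = (((n:ℝ) + θ : ℝ) : ℂ) by push_cast; ring,
    Complex.norm_real, Real.norm_eq_abs, ← Real.rpow_natCast |(n:ℝ) + θ| 2]
  norm_num
end setup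

section coeff
variable (θ : ℝ) (hs : Real.sin (Real.pi * θ) ≠ 0)

include hs in
lemma coeff_eq (n : ℤ) (hd : ((n : ℂ) + θ) ≠ 0) :
    haveI : Fact (0 < 2 * Real.pi) := ⟨by positivity⟩
    fourierCoeff (AddCircle.liftIco (2 * Real.pi) 0 (ff θ)) n = 1 / ((n : ℂ) + θ) ^ 2 := by
  haveI : Fact (0 < 2 * Real.pi) := ⟨by positivity⟩
  have hπc : (Real.pi : ℂ) ≠ 0 := Complex.ofReal_ne_zero.mpr Real.pi_ne_zero
  set c : ℂ := -(((n : ℂ) + θ)) * I with hc_def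
  have hc : c ≠ 0 := by
    rw [hc_def]
    exact mul_ne_zero (neg_ne_zero.mpr hd) Complex.I_ne_zero
  have hcsq : c ^ 2 = -(((n : ℂ) + θ) ^ 2) := by
    rw [hc_def]
    linear_combination (((n : ℂ) + θ) ^ 2) * Complex.I_sq
  have h1 : Complex.exp (((-n : ℤ) : ℂ) * (2 * ↑Real.pi * I)) = 1 :=
    Complex.exp_int_mul_two_pi_mul_I (-n)
  have hexp2 : Complex.exp (c * ((0:ℂ) + 2 * ↑Real.pi)) = bb θ ^ 2 := by
    have h : c * ((0:ℂ) + 2 * (Real.pi : ℂ))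
        = ((-n : ℤ) : ℂ) * (2 * (Real.pi : ℂ) * I)
          + ((-(↑Real.pi * ↑θ) * I) + (-(↑Real.pi * ↑θ) * I)) := by
      push_cast [hc_def]; ring
    rw [h, Complex.exp_add, Complex.exp_add, h1, one_mul, bb, sq]
  rw [fourierCoeff_liftIco_eq (ff θ) n, fourierCoeffOn_eq_integral]
  have hint : (∫ t in (0:ℝ)..(0 + 2 * Real.pi), fourier (-n) (t : AddCircle ((0:ℝ) + 2 * Real.pi - 0)) • ff θ t)
      = ∫ t in (0:ℝ)..(0 + 2 * Real.pi), (PP θ ^ 2 + BB θ * t) * Complex.exp (c * t) := by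
    refine intervalIntegral.integral_congr fun t ht => ?_
    rw [fourier_coe_apply, smul_eq_mul, ff]
    rw [mul_comm, mul_assoc, ← Complex.exp_add]
    congr 2
    push_cast [hc_def]
    field_simp
    ring
  rw [hint, integral_linear_mul_exp _ _ _ hc]
  push_cast
  simp only [mul_zero, add_zero, Complex.exp_zero]
  rw [hexp2]
  have he1 := e1 θ hs
  have he2 := e2 θ hs
  have he3 := e3 θ hs
  rw [real_smul]
  push_cast
  field_simp
  linear_combination (c * bb θ ^ 2 * ((n:ℂ) + θ) ^ 2) * he1
    + (PP θ ^ 2 * c * ((n:ℂ) + θ) ^ 2) * he2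
    + (((n:ℂ) + θ) ^ 2) * he3
    + (-(2 * (Real.pi:ℂ))) * hcsq

end coeff

/-- Absolutely convergent series:
`∑_{m∈ℤ} e^{ix(m+θ)}/(m+θ)² = (π/sin πθ)² e^{2πiθ⌊x/(2π)+1/2⌋}
  + (iπ/sin πθ)(x − 2π⌊x/(2π)+1/2⌋) e^{2πiθ(⌊x/(2π)⌋+1/2)}`. -/
theorem stmt2 (x θ : ℝ) (hθ : ∀ m : ℤ, θ ≠ m)
    (hx1 : ∀ m : ℤ, x / (2 * Real.pi) ≠ m)
    (hx2 : ∀ m : ℤ, x / (2 * Real.pi) + 1 / 2 ≠ m) :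
    HasSum (fun m : ℤ =>
        Complex.exp (Complex.I * (x : ℂ) * ((m : ℂ) + (θ : ℂ))) / ((m : ℂ) + (θ : ℂ)) ^ 2)
      (((Real.pi / Real.sin (Real.pi * θ) : ℝ) : ℂ) ^ 2 *
          Complex.exp (2 * (Real.pi : ℂ) * Complex.I * (θ : ℂ) *
            ((⌊x / (2 * Real.pi) + 1 / 2⌋ : ℤ) : ℂ))
        + Complex.I * ((Real.pi / Real.sin (Real.pi * θ) : ℝ) : ℂ) *
            (((x - 2 * Real.pi * (⌊x / (2 * Real.pi) + 1 / 2⌋ : ℤ) : ℝ)) : ℂ) *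
            Complex.exp (2 * (Real.pi : ℂ) * Complex.I * (θ : ℂ) *
              (((⌊x / (2 * Real.pi)⌋ : ℤ) : ℂ) + 1 / 2))) := by
  have hπ : (0:ℝ) < Real.pi := Real.pi_pos
  have hs : Real.sin (Real.pi * θ) ≠ 0 := by
    refine Real.sin_ne_zero_iff.mpr fun n hn => hθ n ?_
    have h2 : Real.pi * θ = Real.pi * n := by linarith
    exact mul_left_cancel₀ Real.pi_ne_zero h2
  haveI : Fact (0 < 2 * Real.pi) := ⟨by positivity⟩
  -- continuous periodic function on the circle
  set Gc : C(AddCircle (2 * Real.pi), ℂ) :=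
    ⟨AddCircle.liftIco (2 * Real.pi) 0 (ff θ),
      AddCircle.liftIco_continuous (ff_per θ hs) (ff_cont θ hs).continuousOn⟩ with hGc_def
  have hd : ∀ n : ℤ, ((n : ℂ) + θ) ≠ 0 := by
    intro n h
    apply hθ (-n)
    have : (θ : ℂ) = (((-n : ℤ) : ℝ) : ℂ) := by push_cast; linear_combination h
    exact_mod_cast this
  have hcoeff : ∀ n : ℤ, fourierCoeff (⇑Gc) n = 1 / ((n : ℂ) + θ) ^ 2 :=
    fun n => coeff_eq θ hs n (hd n)
  have hsum : Summable (fourierCoeff (⇑Gc)) :=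
    (summ_aux θ hs).congr fun n => (hcoeff n).symm
  have HS := has_pointwise_sum_fourier_series_of_summable hsum ((x : ℝ) : AddCircle (2 * Real.pi))
  simp only [hcoeff] at HS
  have HS2 := HS.mul_left (Complex.exp (I * x * θ))
  -- identify the value
  set u : ℝ := x / (2 * Real.pi) with hu
  set k : ℤ := ⌊u⌋ with hk
  have hx' : x = u * (2 * Real.pi) := by rw [hu]; field_simp
  set y : ℝ := x - 2 * Real.pi * k with hy_def
  have hyf : y = Int.fract u * (2 * Real.pi) := by
    rw [hy_def, Int.fract, hx']; ring
  have hy : y ∈ Set.Ico (0:ℝ) (0 + 2 * Real.pi) := by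
    constructor
    · rw [hyf]; exact mul_nonneg (Int.fract_nonneg u) (by positivity)
    · rw [hyf, zero_add]
      nlinarith [Int.fract_lt_one u, Real.pi_pos]
  have hxy : ((x : ℝ) : AddCircle (2 * Real.pi)) = (y : AddCircle (2 * Real.pi)) := by
    have h0 : (((k:ℝ) * (2 * Real.pi) : ℝ) : AddCircle (2 * Real.pi)) = 0 :=
      (AddCircle.coe_eq_zero_iff _).mpr ⟨k, by rw [zsmul_eq_mul]⟩
    calc ((x : ℝ) : AddCircle (2 * Real.pi)) = ↑(y + (k:ℝ) * (2 * Real.pi)) := by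
          rw [show y + (k:ℝ) * (2 * Real.pi) = x by rw [hy_def]; ring]
    _ = (y : AddCircle (2 * Real.pi)) + ↑((k:ℝ) * (2 * Real.pi)) := AddCircle.coe_add _ _ _
    _ = (y : AddCircle (2 * Real.pi)) := by rw [h0, add_zero]
  have hGval : Gc ((x : ℝ) : AddCircle (2 * Real.pi)) = ff θ y := by
    rw [hxy, hGc_def]
    exact AddCircle.liftIco_coe_apply (f := ff θ) hy
  -- fract u ≠ 1/2
  have hfr : Int.fract u ≠ 1 / 2 := by
    intro h
    apply hx2 (k + 1)
    have hff : (k:ℝ) + Int.fract u = u := by rw [hk]; exact_mod_cast Int.floor_add_fract u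
    push_cast
    linarith [hff, h]
  have hsplit : Complex.exp (2 * (Real.pi:ℂ) * I * θ * ((k:ℂ) + 1/2))
      = Complex.exp (2 * (Real.pi:ℂ) * I * θ * (k:ℂ)) * aa θ := by
    rw [aa, ← Complex.exp_add]; congr 1; ring
  have hE : Complex.exp (I * (x:ℂ) * θ) * Complex.exp (-(θ:ℂ) * I * (y:ℝ))
      = Complex.exp (2 * (Real.pi:ℂ) * I * θ * (k:ℂ)) := by
    rw [← Complex.exp_add]; congr 1
    rw [hy_def]; push_cast; ring
  have hP0 : ((Real.pi / Real.sin (Real.pi * θ) : ℝ) : ℂ) = PP θ := by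
    rw [PP]; push_cast; ring
  -- floor of u + 1/2
  have hm : (⌊u + 1/2⌋ : ℤ) = if Int.fract u < 1/2 then k else k + 1 := by
    have h1 : u + 1/2 = (Int.fract u + 1/2) + (k:ℝ) := by
      have := Int.floor_add_fract u; push_cast; linarith
    rw [h1, Int.floor_add_intCast]
    rcases lt_or_gt_of_ne hfr with h | h
    · rw [if_pos h, Int.floor_eq_zero_iff.mpr
        ⟨by have := Int.fract_nonneg u; linarith, by linarith⟩]
      ring
    · rw [if_neg (not_lt.mpr h.le)]
      have h1 : ⌊Int.fract u + 1/2⌋ = 1 := by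
        rw [Int.floor_eq_iff]
        constructor
        · push_cast; linarith
        · push_cast; nlinarith [Int.fract_lt_one u]
      rw [h1]; ring
  have hsplit2 : Complex.exp (2 * (Real.pi:ℂ) * I * θ * ((k:ℂ) + 1))
      = Complex.exp (2 * (Real.pi:ℂ) * I * θ * (k:ℂ)) * aa θ ^ 2 := by
    rw [aa, sq, ← Complex.exp_add, ← Complex.exp_add]; congr 1; ring
  have hB : BB θ = I * PP θ * aa θ := rfl
  have hkey := keyId θ hs
  have hfun : (fun n : ℤ => Complex.exp (Complex.I * (x:ℂ) * ((n:ℂ) + (θ:ℂ))) / ((n:ℂ) + (θ:ℂ)) ^ 2)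
      = fun n : ℤ => Complex.exp (I * (x:ℂ) * (θ:ℂ))
          * ((1 / ((n:ℂ) + θ) ^ 2) • fourier n ((x : ℝ) : AddCircle (2 * Real.pi))) := by
    funext n
    rw [fourier_coe_apply, smul_eq_mul]
    have harg : 2 * (Real.pi:ℂ) * I * (n:ℂ) * (x:ℂ) / (((2 * Real.pi : ℝ)) : ℂ)
        = I * (x:ℂ) * (n:ℂ) := by
      have : ((2 * Real.pi : ℝ) : ℂ) ≠ 0 := by
        push_cast
        exact mul_ne_zero two_ne_zero (Complex.ofReal_ne_zero.mpr Real.pi_ne_zero)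
      rw [div_eq_iff this]
      push_cast
      ring
    rw [harg, div_eq_mul_one_div, mul_comm (Complex.exp _) (1 / _), mul_left_comm,
      ← Complex.exp_add]
    congr 2
    ring
  have hval : Complex.exp (I * (x:ℂ) * (θ:ℂ)) * Gc ((x : ℝ) : AddCircle (2 * Real.pi))
      = (((Real.pi / Real.sin (Real.pi * θ) : ℝ) : ℂ) ^ 2 *
          Complex.exp (2 * (Real.pi : ℂ) * Complex.I * (θ : ℂ) * ((⌊u + 1 / 2⌋ : ℤ) : ℂ))
        + Complex.I * ((Real.pi / Real.sin (Real.pi * θ) : ℝ) : ℂ) *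
            (((x - 2 * Real.pi * (⌊u + 1 / 2⌋ : ℤ) : ℝ)) : ℂ) *
            Complex.exp (2 * (Real.pi : ℂ) * Complex.I * (θ : ℂ) * ((k : ℂ) + 1 / 2))) := by
    have hyc : ((y:ℝ):ℂ) = (x:ℂ) - 2 * (Real.pi:ℂ) * (k:ℂ) := by
      rw [hy_def]; push_cast; ring
    rw [hGval, hP0, hm]
    simp only [ff]
    rw [hyc] at hE ⊢
    split_ifs with hcase
    · push_cast
      linear_combination (PP θ ^ 2 + BB θ * ((x:ℂ) - 2 * (Real.pi:ℂ) * (k:ℂ))) * hE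
        + (-(I * PP θ * ((x:ℂ) - 2 * (Real.pi:ℂ) * (k:ℂ)))) * hsplit
        + (((x:ℂ) - 2 * (Real.pi:ℂ) * (k:ℂ)) * Complex.exp (2 * (Real.pi:ℂ) * I * θ * (k:ℂ))) * hB
    · push_cast
      linear_combination (PP θ ^ 2 + BB θ * ((x:ℂ) - 2 * (Real.pi:ℂ) * (k:ℂ))) * hE
        + (-(PP θ ^ 2)) * hsplit2
        + (-(I * PP θ * ((x:ℂ) - 2 * (Real.pi:ℂ) * (k:ℂ) - 2 * (Real.pi:ℂ)))) * hsplit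
        + (-(Complex.exp (2 * (Real.pi:ℂ) * I * θ * (k:ℂ)))) * hkey
        + ((((x:ℂ) - 2 * (Real.pi:ℂ) * (k:ℂ))) * Complex.exp (2 * (Real.pi:ℂ) * I * θ * (k:ℂ))) * hB
        + (-(2 * (Real.pi:ℂ) * Complex.exp (2 * (Real.pi:ℂ) * I * θ * (k:ℂ)))) * hB
  rw [← hfun] at HS2
  rwa [hval] at HS2
end

section
/- Let K = {2π(m+1/2)/L : m ∈ ℤ} and K_box = {2πnm/L : m ∈ ℤ} for integers n ≥ 1 and L > 0. Define φ(λ, (α,b)) = (i√n/L)·(1 − e^{iLλ/n})/(λ−α)·e^{−iLbλ/n} for λ ∈ K, α ∈ K_box, b ∈ {1,...,n}. Then for fixed λ, μ ∈ K: ∑_{α∈K_box} ∑_{b=1}^{n} φ(λ,(α,b))* · φ(μ,(α,b)) = δ_{λ,μ}. -/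
/-
Fix the block `b` and put `T = L / n`. On the interval `[bT, (b+1)T]` the box momenta
`α = 2πm/T` are exactly the Fourier frequencies, and `φ(λ, (α, b))` is, up to the factor `√n`,
the conjugate of the `m`-th Fourier coefficient of `t ↦ e^{iλt}` on that interval. Parseval's
identity therefore sums the `α`-series to the average of `e^{i(λ-μ)t}` over the block. Summing
the `n` blocks gives the average of `e^{i(λ-μ)t}` over `[0, L]`, and `(λ - μ)L ∈ 2πℤ`, so this is
`δ_{λμ}`.
-/

/-- Momenta of the full system: `λ_m = 2π(m+1/2)/L`. -/
noncomputable def lamK (L : ℝ) (m : ℤ) : ℝ := 2 * Real.pi * ((m : ℝ) + 1 / 2) / L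

/-- Box momenta: `α_m = 2πnm/L`. -/
noncomputable def kbox (L : ℝ) (n : ℕ) (m : ℤ) : ℝ := 2 * Real.pi * (n : ℝ) * (m : ℝ) / L

/-- Overlap `φ(λ,(α,b)) = (i√n/L)·(1 − e^{iLλ/n})/(λ−α)·e^{−iLbλ/n}`. -/
noncomputable def phi (L : ℝ) (n : ℕ) (l α : ℝ) (b : ℕ) : ℂ :=
  Complex.I * (Real.sqrt n : ℂ) / (L : ℂ) *
    ((1 - Complex.exp (Complex.I * (L : ℂ) * (l : ℂ) / (n : ℂ))) / ((l : ℂ) - (α : ℂ))) *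
    Complex.exp (-Complex.I * (L : ℂ) * (b : ℂ) * (l : ℂ) / (n : ℂ))

open MeasureTheory Complex ComplexConjugate AddCircle
open scoped Real

theorem hasSum_prod_of_hasSum_fiber {α β γ : Type*} [AddCommMonoid α] [TopologicalSpace α]
    [ContinuousAdd α] [Fintype γ] {f : β × γ → α} {g : γ → α}
    (h : ∀ c, HasSum (fun b => f (b, c)) (g c)) : HasSum f (∑ c, g c) := by
  classical
  have hc (c : γ) : HasSum (fun p : β × γ => if p.2 = c then f p else 0) (g c) := by
    refine (Function.Injective.hasSum_iff (g := fun b => (b, c)) (fun _ _ h => congrArg Prod.fst h)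
      ?_).mp (by simpa [Function.comp_def] using h c)
    rintro ⟨b, c'⟩ hp
    exact if_neg fun hc => hp ⟨b, by simp [← hc]⟩
  convert hasSum_sum fun c (_ : c ∈ Finset.univ) => hc c using 1
  ext p
  simp

theorem hasSum_conj_fourierCoeff_mul {T : ℝ} [Fact (0 < T)]
    (f g : Lp ℂ 2 (haarAddCircle (T := T))) :
    HasSum (fun i => conj (fourierCoeff f i) * fourierCoeff g i)
      (∫ t, conj (f t) * g t ∂haarAddCircle) := by
  simp_rw [mul_comm (conj _)]
  refine HasSum.congr_fun (fourierBasis.hasSum_inner_mul_inner f g) (fun i => ?_)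
  simp only [← fourierBasis_repr, HilbertBasis.repr_apply_apply, inner_conj_symm,
    mul_comm (inner ℂ f _)]

theorem hasSum_conj_fourierCoeffOn_mul {a b : ℝ} {f g : ℝ → ℂ} (hab : a < b)
    (hf : MemLp f 2 (volume.restrict (Set.Ioc a b)))
    (hg : MemLp g 2 (volume.restrict (Set.Ioc a b))) :
    HasSum (fun i => conj (fourierCoeffOn hab f i) * fourierCoeffOn hab g i)
      ((b - a)⁻¹ • ∫ x in a..b, conj (f x) * g x) := by
  have := Fact.mk (by linarith : 0 < b - a)
  rw [← add_sub_cancel a b] at hf hg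
  have hf' := hf.memLp_liftIoc.haarAddCircle
  have hg' := hg.memLp_liftIoc.haarAddCircle
  convert hasSum_conj_fourierCoeff_mul hf'.toLp hg'.toLp using 1
  · ext i
    simp [fourierCoeff_congr_ae hf'.coeFn_toLp, fourierCoeff_congr_ae hg'.coeFn_toLp,
      fourierCoeff_liftIoc_eq]
  · nth_rw 2 [← add_sub_cancel a b]
    rw [← integral_liftIoc_eq_intervalIntegral, ← integral_haarAddCircle]
    refine integral_congr_ae ?_
    filter_upwards [hf'.coeFn_toLp, hg'.coeFn_toLp] with x hfx hgx
    rw [hfx, hgx]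
    rfl

theorem fourierCoeffOn_exp_mul_I {a b ν α : ℝ} (hab : a < b) {m : ℤ}
    (hα : α * (b - a) = 2 * π * m) (hνα : ν ≠ α) :
    fourierCoeffOn hab (fun t : ℝ => exp (I * ν * t)) m =
      (exp (I * (ν - α) * b) - exp (I * (ν - α) * a)) / (I * (ν - α) * (b - a)) := by
  have hba : (b : ℂ) - a ≠ 0 := by exact_mod_cast (sub_pos.mpr hab).ne'
  have hc : I * (ν - α) ≠ 0 := mul_ne_zero I_ne_zero (sub_ne_zero.mpr (by exact_mod_cast hνα))
  have hα' : (α : ℂ) = 2 * π * m / (b - a) := by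
    rw [eq_div_iff hba]; exact_mod_cast hα
  have hexp (x : ℝ) : fourier (-m) (x : AddCircle (b - a)) • exp (I * ν * x) =
      exp (I * (ν - α) * x) := by
    rw [fourier_coe_apply, smul_eq_mul, ← Complex.exp_add, hα']
    congr 1
    push_cast
    ring
  rw [fourierCoeffOn_eq_integral, intervalIntegral.integral_congr fun x _ => hexp x,
    integral_exp_mul_complex hc, real_smul]
  push_cast
  field_simp

theorem exp_I_mul_sub_mul_nat_mul {l α T : ℝ} {m : ℤ} (hαT : α * T = 2 * π * m) (k : ℕ) :
    exp (I * (l - α) * (k * T)) = exp (I * l * T) ^ k := by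
  have hαT' : (α : ℂ) * T = 2 * π * m := by exact_mod_cast hαT
  have : I * (l - α) * (k * T) = k * (I * l * T) + ((-(m * k) : ℤ) : ℂ) * (2 * π * I) := by
    push_cast; linear_combination (-(I * k)) * hαT'
  rw [this, exp_add, exp_nat_mul, exp_int_mul_two_pi_mul_I, mul_one]

theorem conj_phi_kbox {L l : ℝ} {n b : ℕ} {m : ℤ} (hab : b * (L / n) < (b + 1) * (L / n))
    (hl : l ≠ kbox L n m) :
    conj (phi L n l (kbox L n m) (b + 1)) =
      (√n : ℂ)⁻¹ * fourierCoeffOn hab (fun t : ℝ => exp (I * l * t)) m := by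
  obtain ⟨hL, hn⟩ := div_ne_zero_iff.mp (by linarith : L / n ≠ 0)
  have hαT : kbox L n m * (L / n) = 2 * π * m := by
    rw [kbox]; field_simp
  rw [fourierCoeffOn_exp_mul_I hab (by rw [← hαT]; ring) hl]
  set u := exp (I * l * (L / n))
  have hconj : conj (exp (-I * L * (b + 1 : ℕ) * l / n)) = u ^ (b + 1) := by
    rw [← exp_conj, ← exp_nat_mul]
    simp only [map_mul, map_div₀, map_neg, conj_I, conj_ofReal, map_natCast]
    ring_nf
  have hconj' : conj (exp (I * L * l / n)) = u⁻¹ := by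
    rw [← exp_conj, ← exp_neg]
    simp only [map_mul, map_div₀, conj_I, conj_ofReal, map_natCast]
    ring_nf
  have hpow : exp (I * (l - kbox L n m) * (b * (L / n))) = u ^ b := by
    simpa using exp_I_mul_sub_mul_nat_mul hαT b
  have hpow' : exp (I * (l - kbox L n m) * ((b + 1) * (L / n))) = u ^ (b + 1) := by
    simpa using exp_I_mul_sub_mul_nat_mul hαT (b + 1)
  have hLC : (L : ℂ) ≠ 0 := by exact_mod_cast hL
  have hnC : (n : ℂ) ≠ 0 := by exact_mod_cast hn
  have hu : u ≠ 0 := exp_ne_zero _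
  have hlα : (l : ℂ) - kbox L n m ≠ 0 := sub_ne_zero.mpr (by exact_mod_cast hl)
  have hsn : (√n : ℂ) ≠ 0 := by
    exact_mod_cast Real.sqrt_ne_zero'.mpr (lt_of_le_of_ne n.cast_nonneg hn.symm)
  have hs : (√n : ℂ) ^ 2 = n := by norm_cast; simp
  rw [phi, map_mul, hconj]
  simp only [map_mul, map_div₀, map_sub, map_one, conj_I, conj_ofReal, hconj']
  push_cast
  rw [hpow, hpow']
  field_simp
  ring_nf
  rw [I_sq, hs]
  ring

theorem memLp_exp_mul_I (ν a b : ℝ) :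
    MemLp (fun t : ℝ => exp (I * ν * t)) 2 (volume.restrict (Set.Ioc a b)) :=
  MemLp.of_bound (by fun_prop) 1 (ae_of_all _ fun t => by
    rw [norm_exp]; simp)

theorem integral_exp_two_pi_int_div_mul_I {L : ℝ} (hL : L ≠ 0) (k : ℤ) :
    ∫ t in (0 : ℝ)..L, exp (I * ↑(2 * π * k / L) * t) = if k = 0 then (L : ℂ) else 0 := by
  split_ifs with hk
  · simp [hk]
  · have hc : I * ↑(2 * π * k / L) ≠ 0 := by
      refine mul_ne_zero I_ne_zero ?_
      exact_mod_cast div_ne_zero (by positivity) hL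
    have hLC : (L : ℂ) ≠ 0 := by exact_mod_cast hL
    have hperiod : I * ↑(2 * π * k / L) * L = k * (2 * π * I) := by
      push_cast; field_simp
    rw [integral_exp_mul_complex hc, hperiod, exp_int_mul_two_pi_mul_I]
    simp

theorem sum_intervalIntegral_fin {f : ℝ → ℂ} (hf : Continuous f) (T : ℝ) (n : ℕ) :
    ∑ b : Fin n, ∫ t in b * T..(b + 1) * T, f t = ∫ t in (0 : ℝ)..n * T, f t := by
  rw [Fin.sum_univ_eq_sum_range (fun b : ℕ => ∫ t in b * T..(b + 1) * T, f t)]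
  have := intervalIntegral.sum_integral_adjacent_intervals (a := fun b : ℕ => b * T) (n := n)
    (μ := volume) (fun _ _ => hf.intervalIntegrable _ _)
  simpa using this

theorem lamK_ne_kbox {L : ℝ} (hL : L ≠ 0) (n : ℕ) (m' m : ℤ) : lamK L m' ≠ kbox L n m := by
  intro h
  rw [lamK, kbox, div_left_inj' hL] at h
  have hodd : (2 * m' + 1 : ℤ) = 2 * (n * m) := by
    have : ((2 * m' + 1 : ℤ) : ℝ) = (2 * (n * m) : ℤ) := by
      push_cast; nlinarith [Real.pi_pos]
    exact_mod_cast this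
  omega

theorem lamK_sub_lamK (L : ℝ) (m₁ m₂ : ℤ) :
    lamK L m₁ - lamK L m₂ = 2 * π * ((m₁ - m₂ : ℤ) : ℝ) / L := by
  rw [lamK, lamK]; push_cast; ring

theorem hasSum_conj_phi_mul_phi {L l₁ l₂ : ℝ} {n : ℕ} (hT : 0 < L / n)
    (hl₁ : ∀ m, l₁ ≠ kbox L n m) (hl₂ : ∀ m, l₂ ≠ kbox L n m) (b : ℕ) :
    HasSum (fun m => conj (phi L n l₁ (kbox L n m) (b + 1)) * phi L n l₂ (kbox L n m) (b + 1))
      ((L : ℂ)⁻¹ * ∫ t in b * (L / n)..(b + 1) * (L / n), exp (I * ↑(l₁ - l₂) * t)) := by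
  have hab : b * (L / n) < (b + 1) * (L / n) := by linarith
  have hsqrt : (√n : ℂ) * √n = n := by
    exact_mod_cast Real.mul_self_sqrt n.cast_nonneg
  have hparseval := (hasSum_conj_fourierCoeffOn_mul hab (memLp_exp_mul_I l₂ _ _)
    (memLp_exp_mul_I l₁ _ _)).mul_left (n : ℂ)⁻¹
  have hterm : (fun m => conj (phi L n l₁ (kbox L n m) (b + 1)) * phi L n l₂ (kbox L n m) (b + 1))
      = fun m => (n : ℂ)⁻¹ * (conj (fourierCoeffOn hab (fun t : ℝ => exp (I * l₂ * t)) m) *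
          fourierCoeffOn hab (fun t : ℝ => exp (I * l₁ * t)) m) := by
    funext m
    rw [conj_phi_kbox hab (hl₁ m), ← conj_conj (phi L n l₂ _ _), conj_phi_kbox hab (hl₂ m),
      map_mul, map_inv₀, conj_ofReal, ← hsqrt]
    ring
  have hint (x : ℝ) : conj (exp (I * l₂ * x)) * exp (I * l₁ * x) = exp (I * ↑(l₁ - l₂) * x) := by
    rw [← exp_conj, ← exp_add]
    simp only [map_mul, conj_I, conj_ofReal]
    push_cast; ring_nf
  simp_rw [hint] at hparseval
  rw [show (b + 1) * (L / n) - b * (L / n) = L / n by ring, real_smul, ← mul_assoc] at hparseval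
  have hn : (n : ℂ) ≠ 0 := by exact_mod_cast (div_ne_zero_iff.mp hT.ne').2
  have hscale : (L : ℂ)⁻¹ = (n : ℂ)⁻¹ * ↑(L / n)⁻¹ := by
    push_cast
    rw [inv_div, ← mul_div_assoc, inv_mul_cancel₀ hn, one_div]
  rwa [hterm, hscale]

/-- Completeness of the wavelet family: for `λ, μ ∈ K`,
`∑_{α∈K_box} ∑_{b=1}^n φ(λ,(α,b))* φ(μ,(α,b)) = δ_{λ,μ}`, the double sum
converging (absolutely/unconditionally). -/
theorem stmt5 (L : ℝ) (hL : 0 < L) (n : ℕ) (hn : 1 ≤ n) (m₁ m₂ : ℤ) :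
    HasSum (fun x : ℤ × Fin n =>
        (starRingEnd ℂ) (phi L n (lamK L m₁) (kbox L n x.1) (x.2.val + 1)) *
          phi L n (lamK L m₂) (kbox L n x.1) (x.2.val + 1))
      (if m₁ = m₂ then 1 else 0) := by
  have hT : 0 < L / n := div_pos hL (by exact_mod_cast hn)
  have hfiber (b : Fin n) := hasSum_conj_phi_mul_phi hT (lamK_ne_kbox hL.ne' n m₁)
    (lamK_ne_kbox hL.ne' n m₂) b
  have hsum : ∑ b : Fin n, (L : ℂ)⁻¹ * ∫ t in (b : ℕ) * (L / n)..((b : ℕ) + 1) * (L / n),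
      exp (I * ↑(lamK L m₁ - lamK L m₂) * t) = if m₁ = m₂ then 1 else 0 := by
    rw [← Finset.mul_sum, sum_intervalIntegral_fin (by fun_prop),
      mul_div_cancel₀ L (by positivity : (n : ℝ) ≠ 0), lamK_sub_lamK,
      integral_exp_two_pi_int_div_mul_I hL.ne']
    simp only [sub_eq_zero]
    split_ifs
    · exact inv_mul_cancel₀ (by exact_mod_cast hL.ne')
    · rw [mul_zero]
  exact hsum ▸ hasSum_prod_of_hasSum_fiber hfiber
end

section
/- With φ as above and G_t((α,b),(β,c)) := ∑_{λ∈K} φ(λ,(α,b))* φ(λ,(β,c)) e^{−itλ²}, the family G_t satisfies the group composition law ∑_{(γ,d)} G_t((α,b),(γ,d))·G_{−t}((γ,d),(β,c)) = δ_{α,β}δ_{b,c}, i.e. G_{−t} is the inverse of G_t; more generally G_s G_t = G_{s+t}. -/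
open scoped BigOperators

/-- Green's function `G_t((α,b),(β,c)) = ∑_{λ∈K} φ(λ,(α,b))* φ(λ,(β,c)) e^{−itλ²}`. -/
noncomputable def Gt (L : ℝ) (n : ℕ) (t : ℝ) (α : ℝ) (b : ℕ) (β : ℝ) (c : ℕ) : ℂ :=
  ∑' m : ℤ, (starRingEnd ℂ) (phi L n (lamK L m) α b) * phi L n (lamK L m) β c *
    Complex.exp (-Complex.I * (t : ℂ) * ((lamK L m : ℝ) : ℂ) ^ 2)

noncomputable section StmtAux

open MeasureTheory Set Complex Real
open scoped ENNReal

local notation "⟪" x ", " y "⟫" => @inner ℂ _ _ x y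

namespace StmtAux

/-! ### Elementary real/complex identities -/

lemma lamK_ne_kbox {L : ℝ} (hL : 0 < L) (n : ℕ) (m m' : ℤ) :
    lamK L m ≠ kbox L n m' := by
  intro h
  rw [lamK, kbox, div_eq_div_iff hL.ne' hL.ne'] at h
  have hc : 2 * π * ((m : ℝ) + 1 / 2) = 2 * π * (n : ℝ) * (m' : ℝ) :=
    mul_right_cancel₀ hL.ne' h
  have h2 : π * ((2 * m + 1 : ℤ) : ℝ) = π * ((2 * n * m' : ℤ) : ℝ) := by
    push_cast
    linear_combination hc
  have h3 : (2 * m + 1 : ℤ) = (2 * n * m' : ℤ) := by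
    exact_mod_cast mul_left_cancel₀ Real.pi_ne_zero h2
  have h5 : (2:ℤ) ∣ 2 * m + 1 := ⟨(n:ℤ) * m', by linear_combination h3⟩
  omega

lemma lamK_sub_ne {L : ℝ} (hL : 0 < L) {m k : ℤ} (h : m ≠ k) :
    lamK L k - lamK L m ≠ 0 := by
  simp only [lamK]
  rw [div_sub_div_same, div_ne_zero_iff]
  refine ⟨fun h2 => h ?_, hL.ne'⟩
  have h3 : ((k - m : ℤ) : ℝ) * (2 * π) = 0 := by push_cast; linear_combination h2
  have h4 : ((k - m : ℤ) : ℝ) = 0 := by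
    rcases mul_eq_zero.1 h3 with h5 | h5
    · exact h5
    · exact absurd h5 (by positivity)
  have h6 : (k : ℤ) - m = 0 := by exact_mod_cast h4
  omega

lemma kbox_sub_ne {L : ℝ} (hL : 0 < L) {n : ℕ} (hn : 1 ≤ n) {m k : ℤ} (h : m ≠ k) :
    kbox L n k - kbox L n m ≠ 0 := by
  have hn0 : (0:ℝ) < n := by exact_mod_cast Nat.pos_of_ne_zero (by omega)
  simp only [kbox]
  rw [div_sub_div_same, div_ne_zero_iff]
  refine ⟨fun h2 => h ?_, hL.ne'⟩
  have h3 : ((k - m : ℤ) : ℝ) * (2 * π * n) = 0 := by push_cast; linear_combination h2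
  have h4 : ((k - m : ℤ) : ℝ) = 0 := by
    rcases mul_eq_zero.1 h3 with h5 | h5
    · exact h5
    · exact absurd h5 (by positivity)
  have h6 : (k : ℤ) - m = 0 := by exact_mod_cast h4
  omega

lemma norm_exp_I_mul (r y : ℝ) : ‖Complex.exp (Complex.I * (r : ℂ) * (y : ℂ))‖ = 1 := by
  rw [Complex.norm_exp]
  have : (Complex.I * (r : ℂ) * (y : ℂ)).re = 0 := by simp [Complex.mul_re]
  rw [this, Real.exp_zero]

lemma exp_I_mul_add (a b y : ℝ) :
    Complex.exp (Complex.I * (a : ℂ) * y) * Complex.exp (Complex.I * (b : ℂ) * y) =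
      Complex.exp (Complex.I * ((a + b : ℝ) : ℂ) * y) := by
  rw [← Complex.exp_add]
  congr 1
  push_cast
  ring

lemma exp_I_mul_eq_one {a z : ℝ} (w : ℤ) (h : a * z = w * (2 * π)) :
    Complex.exp (Complex.I * (a : ℂ) * (z : ℂ)) = 1 := by
  have h1 : Complex.I * (a : ℂ) * (z : ℂ) = ((a * z : ℝ) : ℂ) * Complex.I := by
    push_cast; ring
  rw [h1, h]
  have h2 : (((w : ℝ) * (2 * π) : ℝ) : ℂ) * Complex.I = (w : ℂ) * (2 * (π : ℂ) * Complex.I) := by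
    push_cast; ring
  rw [h2, Complex.exp_int_mul_two_pi_mul_I]

lemma conj_exp_I_mul (r y : ℝ) :
    (starRingEnd ℂ) (Complex.exp (Complex.I * (r : ℂ) * y)) =
      Complex.exp (Complex.I * ((-r : ℝ) : ℂ) * y) := by
  rw [← Complex.exp_conj]
  congr 1
  simp only [map_mul, Complex.conj_I, Complex.conj_ofReal]
  push_cast
  ring

/-- The basic exponential integral over `Ioc`. -/
lemma integral_exp_Ioc (a b r : ℝ) (hab : a ≤ b) :
    ∫ x in Set.Ioc a b, Complex.exp (Complex.I * (r : ℂ) * (x : ℂ)) =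
      if r = 0 then (((b - a : ℝ)) : ℂ)
      else (Complex.exp (Complex.I * r * b) - Complex.exp (Complex.I * r * a)) /
        (Complex.I * r) := by
  split_ifs with hr
  · subst hr
    simp only [Complex.ofReal_zero, mul_zero, zero_mul, Complex.exp_zero]
    rw [MeasureTheory.setIntegral_const]
    rw [Measure.real, Real.volume_Ioc, ENNReal.toReal_ofReal (by linarith)]
    simp [Complex.real_smul]
  · rw [← intervalIntegral.integral_of_le hab]
    have hc : (Complex.I * (r : ℂ)) ≠ 0 :=
      mul_ne_zero Complex.I_ne_zero (Complex.ofReal_ne_zero.2 hr)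
    exact integral_exp_mul_complex hc

/-! ### The Hilbert space and the two families of functions -/

lemma isFiniteMuL (L : ℝ) :
    MeasureTheory.IsFiniteMeasure (MeasureTheory.volume.restrict (Set.Ioc (0:ℝ) L)) := by
  constructor
  rw [MeasureTheory.Measure.restrict_apply_univ, Real.volume_Ioc]
  exact ENNReal.ofReal_lt_top

/-- The antiperiodic exponentials `e^{iλ_m x}/√L`. -/
def ufun (L : ℝ) (m : ℤ) : ℝ → ℂ := fun x =>
  ((Real.sqrt L : ℂ))⁻¹ * Complex.exp (Complex.I * (lamK L m : ℂ) * (x : ℂ))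

/-- The box-state wave functions `√(n/L)·e^{iα_{m'}x}·1_{(d·L/n,(d+1)·L/n]}`. -/
def ffun (L : ℝ) (n : ℕ) (x : ℤ × Fin n) : ℝ → ℂ :=
  (Set.Ioc ((x.2 : ℝ) * (L / n)) (((x.2 : ℝ) + 1) * (L / n))).indicator fun y =>
    (Real.sqrt ((n : ℝ) / L) : ℂ) * Complex.exp (Complex.I * (kbox L n x.1 : ℂ) * (y : ℂ))

lemma memLp_ufun (L : ℝ) (m : ℤ) :
    MeasureTheory.MemLp (ufun L m) 2 (MeasureTheory.volume.restrict (Set.Ioc (0:ℝ) L)) := by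
  haveI := isFiniteMuL L
  refine MeasureTheory.MemLp.of_bound (Continuous.aestronglyMeasurable ?_) ((Real.sqrt L)⁻¹) ?_
  · unfold ufun; fun_prop
  · filter_upwards with x
    rw [ufun, norm_mul, StmtAux.norm_exp_I_mul, mul_one, norm_inv, Complex.norm_real,
      Real.norm_eq_abs, _root_.abs_of_nonneg (Real.sqrt_nonneg L)]

lemma memLp_ffun (L : ℝ) (n : ℕ) (x : ℤ × Fin n) :
    MeasureTheory.MemLp (ffun L n x) 2 (MeasureTheory.volume.restrict (Set.Ioc (0:ℝ) L)) := by
  haveI := isFiniteMuL L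
  refine MeasureTheory.MemLp.of_bound ?_ (Real.sqrt ((n : ℝ) / L)) ?_
  · exact (Continuous.aestronglyMeasurable (by fun_prop)).indicator measurableSet_Ioc
  · filter_upwards with y
    rw [ffun]
    by_cases h : y ∈ Set.Ioc ((x.2 : ℝ) * (L / n)) (((x.2 : ℝ) + 1) * (L / n))
    · rw [Set.indicator_of_mem h, norm_mul, StmtAux.norm_exp_I_mul, mul_one,
        Complex.norm_real, Real.norm_eq_abs, _root_.abs_of_nonneg (Real.sqrt_nonneg _)]
    · rw [Set.indicator_of_notMem h, norm_zero]
      exact Real.sqrt_nonneg _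

/-- The `L²` element attached to `ufun`. -/
def uLp (L : ℝ) (m : ℤ) :
    MeasureTheory.Lp ℂ 2 (MeasureTheory.volume.restrict (Set.Ioc (0:ℝ) L)) :=
  (memLp_ufun L m).toLp _

/-- The `L²` element attached to `ffun`. -/
def fLp (L : ℝ) (n : ℕ) (x : ℤ × Fin n) :
    MeasureTheory.Lp ℂ 2 (MeasureTheory.volume.restrict (Set.Ioc (0:ℝ) L)) :=
  (memLp_ffun L n x).toLp _

lemma inner_toLp_toLp {L : ℝ} (f g : ℝ → ℂ)
    (hf : MeasureTheory.MemLp f 2 (MeasureTheory.volume.restrict (Set.Ioc (0:ℝ) L)))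
    (hg : MeasureTheory.MemLp g 2 (MeasureTheory.volume.restrict (Set.Ioc (0:ℝ) L))) :
    ⟪hf.toLp f, hg.toLp g⟫ = ∫ x in Set.Ioc (0:ℝ) L, (starRingEnd ℂ) (f x) * g x := by
  rw [MeasureTheory.L2.inner_def]
  apply MeasureTheory.integral_congr_ae
  filter_upwards [hf.coeFn_toLp, hg.coeFn_toLp] with x hx1 hx2
  rw [hx1, hx2, RCLike.inner_apply, mul_comm]

lemma inner_toLp_left {L : ℝ} (f : ℝ → ℂ)
    (hf : MeasureTheory.MemLp f 2 (MeasureTheory.volume.restrict (Set.Ioc (0:ℝ) L)))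
    (g : MeasureTheory.Lp ℂ 2 (MeasureTheory.volume.restrict (Set.Ioc (0:ℝ) L))) :
    ⟪hf.toLp f, g⟫ = ∫ x in Set.Ioc (0:ℝ) L, (starRingEnd ℂ) (f x) * g x := by
  rw [MeasureTheory.L2.inner_def]
  apply MeasureTheory.integral_congr_ae
  filter_upwards [hf.coeFn_toLp] with x hx1
  rw [hx1, RCLike.inner_apply, mul_comm]

/-! ### Inner product computations -/

lemma piece_subset {L : ℝ} (hL : 0 < L) {n : ℕ} (hn : 1 ≤ n) (d : Fin n) :
    Set.Ioc ((d : ℝ) * (L / n)) (((d : ℝ) + 1) * (L / n)) ⊆ Set.Ioc 0 L := by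
  have hn0 : (0:ℝ) < n := by exact_mod_cast Nat.pos_of_ne_zero (by omega)
  apply Set.Ioc_subset_Ioc
  · positivity
  · have hd1 : ((d : ℝ) + 1) ≤ (n : ℝ) := by
      have := d.isLt
      exact_mod_cast Nat.succ_le_of_lt this
    calc ((d : ℝ) + 1) * (L / n) ≤ (n : ℝ) * (L / n) := by
          apply mul_le_mul_of_nonneg_right hd1 (by positivity)
      _ = L := by field_simp
lemma piece_le {L : ℝ} (hL : 0 < L) {n : ℕ} (hn : 1 ≤ n) (d : ℕ) :
    (d : ℝ) * (L / n) ≤ ((d : ℝ) + 1) * (L / n) := by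
  have hn0 : (0:ℝ) < n := by exact_mod_cast Nat.pos_of_ne_zero (by omega)
  have h : (0:ℝ) ≤ L / n := by positivity
  nlinarith

lemma inner_u_u {L : ℝ} (hL : 0 < L) (m k : ℤ) :
    ⟪uLp L m, uLp L k⟫ = if m = k then (1:ℂ) else 0 := by
  rw [uLp, uLp, inner_toLp_toLp]
  have hfun : ∀ z : ℝ, (starRingEnd ℂ) (ufun L m z) * ufun L k z =
      (((Real.sqrt L : ℂ))⁻¹ * ((Real.sqrt L : ℂ))⁻¹) *
        Complex.exp (Complex.I * ((-(lamK L m) + lamK L k : ℝ) : ℂ) * (z : ℂ)) := by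
    intro z
    rw [ufun, ufun, map_mul, StmtAux.conj_exp_I_mul, map_inv₀, Complex.conj_ofReal,
      ← StmtAux.exp_I_mul_add]
    ring
  simp only [hfun]
  rw [MeasureTheory.integral_const_mul, StmtAux.integral_exp_Ioc 0 L _ hL.le]
  rcases eq_or_ne m k with h | h
  · subst h
    rw [if_pos (by ring), if_pos rfl, sub_zero]
    rw [show ((Real.sqrt L : ℂ))⁻¹ * ((Real.sqrt L : ℂ))⁻¹ * (L : ℂ)
        = (((Real.sqrt L)⁻¹ * (Real.sqrt L)⁻¹ * L : ℝ) : ℂ) by push_cast; ring]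
    rw [show (Real.sqrt L)⁻¹ * (Real.sqrt L)⁻¹ * L = 1 by
      have h1 : Real.sqrt L ≠ 0 := by positivity
      field_simp <;> exact (Real.sq_sqrt hL.le).symm]
    norm_num
  · have hr : -(lamK L m) + lamK L k ≠ 0 := by
      rw [neg_add_eq_sub]; exact StmtAux.lamK_sub_ne hL h
    rw [if_neg hr, if_neg h]
    have he1 : Complex.exp (Complex.I * ((-(lamK L m) + lamK L k : ℝ) : ℂ) * (L : ℂ)) = 1 := by
      apply StmtAux.exp_I_mul_eq_one (k - m)
      rw [lamK, lamK]
      field_simp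
      push_cast
      ring
    have he0 : Complex.exp (Complex.I * ((-(lamK L m) + lamK L k : ℝ) : ℂ) * ((0:ℝ) : ℂ)) = 1 := by
      norm_num
    rw [he1, he0]
    simp
lemma inner_f_f {L : ℝ} (hL : 0 < L) {n : ℕ} (hn : 1 ≤ n) (x y : ℤ × Fin n) :
    ⟪fLp L n x, fLp L n y⟫ = if x = y then (1:ℂ) else 0 := by
  have hn0 : (0:ℝ) < n := by exact_mod_cast Nat.pos_of_ne_zero (by omega)
  obtain ⟨x1, d⟩ := x
  obtain ⟨y1, e⟩ := y
  rw [fLp, fLp, inner_toLp_toLp]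
  by_cases hd : d = e
  swap
  · -- disjoint supports
    have hfun : ∀ z : ℝ, (starRingEnd ℂ) (ffun L n (x1, d) z) * ffun L n (y1, e) z = 0 := by
      intro z
      rw [ffun, ffun]
      by_cases h1 : z ∈ Set.Ioc (((x1, d).2 : ℝ) * (L / n)) ((((x1, d).2 : ℝ) + 1) * (L / n))
      · by_cases h2 : z ∈ Set.Ioc (((y1, e).2 : ℝ) * (L / n)) ((((y1, e).2 : ℝ) + 1) * (L / n))
        · exfalso
          apply hd
          have hln : (0:ℝ) < L / n := by positivity
          have hde : (d : ℝ) < (e : ℝ) + 1 :=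
            lt_of_mul_lt_mul_right (lt_of_lt_of_le h1.1 h2.2) hln.le
          have hed : (e : ℝ) < (d : ℝ) + 1 :=
            lt_of_mul_lt_mul_right (lt_of_lt_of_le h2.1 h1.2) hln.le
          have hde' : (d : ℕ) < (e : ℕ) + 1 := by exact_mod_cast hde
          have hed' : (e : ℕ) < (d : ℕ) + 1 := by exact_mod_cast hed
          exact Fin.ext (by omega)
        · rw [Set.indicator_of_notMem h2, mul_zero]
      · rw [Set.indicator_of_notMem h1, map_zero, zero_mul]
    simp only [hfun]
    rw [MeasureTheory.integral_zero]
    rw [if_neg (by rw [Prod.mk.injEq]; exact fun hp => hd hp.2)]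
  · subst hd
    have hfun : ∀ z : ℝ, (starRingEnd ℂ) (ffun L n (x1, d) z) * ffun L n (y1, d) z =
        (Set.Ioc ((d : ℝ) * (L / n)) (((d : ℝ) + 1) * (L / n))).indicator
          (fun z => ((Real.sqrt ((n:ℝ)/L) : ℂ) * (Real.sqrt ((n:ℝ)/L) : ℂ)) *
            Complex.exp (Complex.I * ((-(kbox L n x1) + kbox L n y1 : ℝ) : ℂ) * (z : ℂ))) z := by
      intro z
      rw [ffun, ffun]
      by_cases h1 : z ∈ Set.Ioc ((d : ℝ) * (L / n)) (((d : ℝ) + 1) * (L / n))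
      · rw [Set.indicator_of_mem h1, Set.indicator_of_mem h1, Set.indicator_of_mem h1]
        rw [map_mul, StmtAux.conj_exp_I_mul, Complex.conj_ofReal, ← StmtAux.exp_I_mul_add]
        ring
      · rw [Set.indicator_of_notMem h1, Set.indicator_of_notMem h1,
          Set.indicator_of_notMem h1, map_zero, zero_mul]
    simp only [hfun]
    rw [MeasureTheory.integral_indicator measurableSet_Ioc,
      MeasureTheory.Measure.restrict_restrict measurableSet_Ioc,
      Set.inter_eq_left.mpr (piece_subset hL hn d),
      MeasureTheory.integral_const_mul,
      StmtAux.integral_exp_Ioc _ _ _ (piece_le hL hn d.val)]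
    rcases eq_or_ne x1 y1 with h | h
    · subst h
      rw [if_pos (by ring), if_pos rfl]
      rw [show (((d : ℝ) + 1) * (L / n) - (d : ℝ) * (L / n) : ℝ) = L / n by ring]
      rw [show ((Real.sqrt ((n:ℝ)/L) : ℂ)) * ((Real.sqrt ((n:ℝ)/L) : ℂ)) * ((L / n : ℝ) : ℂ)
          = (((Real.sqrt ((n:ℝ)/L)) * (Real.sqrt ((n:ℝ)/L)) * (L / n) : ℝ) : ℂ) by
        push_cast; ring]
      rw [show (Real.sqrt ((n:ℝ)/L)) * (Real.sqrt ((n:ℝ)/L)) * (L / n) = 1 by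
        rw [Real.mul_self_sqrt (by positivity)]
        field_simp]
      simp
    · have hr : -(kbox L n x1) + kbox L n y1 ≠ 0 := by
        rw [neg_add_eq_sub]; exact StmtAux.kbox_sub_ne hL hn h
      rw [if_neg hr]
      have he1 : Complex.exp (Complex.I * ((-(kbox L n x1) + kbox L n y1 : ℝ) : ℂ) *
          ((((d : ℝ) + 1) * (L / n) : ℝ) : ℂ)) = 1 := by
        apply StmtAux.exp_I_mul_eq_one ((y1 - x1) * ((d : ℤ) + 1))
        rw [kbox, kbox]
        field_simp
        push_cast
        ring
      have he0 : Complex.exp (Complex.I * ((-(kbox L n x1) + kbox L n y1 : ℝ) : ℂ) *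
          (((d : ℝ) * (L / n) : ℝ) : ℂ)) = 1 := by
        apply StmtAux.exp_I_mul_eq_one ((y1 - x1) * (d : ℤ))
        rw [kbox, kbox]
        field_simp
        push_cast
        ring
      rw [he1, he0]
      rw [if_neg (by rw [Prod.mk.injEq]; exact fun hp => h hp.1)]
      simp
lemma inner_u_f {L : ℝ} (hL : 0 < L) {n : ℕ} (hn : 1 ≤ n) (m : ℤ) (x : ℤ × Fin n) :
    ⟪uLp L m, fLp L n x⟫ = phi L n (lamK L m) (kbox L n x.1) (x.2.val + 1) := by
  have hn0 : (0:ℝ) < n := by exact_mod_cast Nat.pos_of_ne_zero (by omega)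
  obtain ⟨x1, d⟩ := x
  rw [uLp, fLp, inner_toLp_toLp]
  set r : ℝ := -(lamK L m) + kbox L n x1 with hrdef
  have hfun : ∀ z : ℝ, (starRingEnd ℂ) (ufun L m z) * ffun L n (x1, d) z =
      (Set.Ioc ((d : ℝ) * (L / n)) (((d : ℝ) + 1) * (L / n))).indicator
        (fun z => (((Real.sqrt L : ℂ))⁻¹ * (Real.sqrt ((n:ℝ)/L) : ℂ)) *
          Complex.exp (Complex.I * (r : ℂ) * (z : ℂ))) z := by
    intro z
    rw [ufun, ffun]
    by_cases h1 : z ∈ Set.Ioc ((d : ℝ) * (L / n)) (((d : ℝ) + 1) * (L / n))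
    · rw [Set.indicator_of_mem h1, Set.indicator_of_mem h1,
        map_mul, StmtAux.conj_exp_I_mul, map_inv₀, Complex.conj_ofReal, hrdef,
        ← StmtAux.exp_I_mul_add]
      ring
    · rw [Set.indicator_of_notMem h1, Set.indicator_of_notMem h1, mul_zero]
  simp only [hfun]
  rw [MeasureTheory.integral_indicator measurableSet_Ioc,
    MeasureTheory.Measure.restrict_restrict measurableSet_Ioc,
    Set.inter_eq_left.mpr (piece_subset hL hn d),
    MeasureTheory.integral_const_mul,
    StmtAux.integral_exp_Ioc _ _ _ (piece_le hL hn d.val)]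
  have hr : r ≠ 0 := by
    rw [hrdef, neg_add_eq_sub, sub_ne_zero]
    exact fun h => StmtAux.lamK_ne_kbox hL n m x1 h.symm
  rw [if_neg hr]
  -- identify the two endpoint exponentials
  have hsplit : ∀ (j : ℕ) (w : ℤ), (kbox L n x1) * ((j : ℝ) * (L / n)) = w * (2 * π) →
      Complex.exp (Complex.I * (r : ℂ) * (((j : ℝ) * (L / n) : ℝ) : ℂ)) =
        Complex.exp (Complex.I * ((-(lamK L m) : ℝ) : ℂ) * (((j : ℝ) * (L / n) : ℝ) : ℂ)) := by
    intro j w hw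
    rw [hrdef, ← StmtAux.exp_I_mul_add, StmtAux.exp_I_mul_eq_one w hw, mul_one]
  have he2 : Complex.exp (Complex.I * (r : ℂ) * ((((d : ℝ) + 1) * (L / n) : ℝ) : ℂ)) =
      Complex.exp (Complex.I * ((-(lamK L m) : ℝ) : ℂ) * ((((d : ℝ) + 1) * (L / n) : ℝ) : ℂ)) := by
    have := hsplit (d.val + 1) (x1 * ((d : ℤ) + 1)) (by
      rw [kbox]; field_simp; push_cast; ring)
    push_cast at this ⊢
    exact this
  have he1 : Complex.exp (Complex.I * (r : ℂ) * (((d : ℝ) * (L / n) : ℝ) : ℂ)) =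
      Complex.exp (Complex.I * ((-(lamK L m) : ℝ) : ℂ) * (((d : ℝ) * (L / n) : ℝ) : ℂ)) := by
    have := hsplit d.val (x1 * (d : ℤ)) (by
      rw [kbox]; field_simp; push_cast; ring)
    push_cast at this ⊢
    exact this
  rw [he2, he1]
  -- now pure algebra
  have hconst_r : (Real.sqrt L)⁻¹ * Real.sqrt ((n:ℝ)/L) = Real.sqrt (n:ℝ) / L := by
    have hs : Real.sqrt L ≠ 0 := by positivity
    have hLL : Real.sqrt L * Real.sqrt L = L := Real.mul_self_sqrt hL.le
    have h2 : Real.sqrt ((n:ℝ)/L) * Real.sqrt L = Real.sqrt (n:ℝ) := by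
      rw [← Real.sqrt_mul (by positivity : (0:ℝ) ≤ (n:ℝ)/L) L, div_mul_cancel₀ _ hL.ne']
    field_simp <;> linear_combination Real.sqrt L * h2 - Real.sqrt ((n:ℝ)/L) * hLL
  have hconstC : ((Real.sqrt L : ℂ))⁻¹ * (Real.sqrt ((n:ℝ)/L) : ℂ)
      = ((Real.sqrt (n:ℝ) : ℝ) : ℂ) / (L : ℂ) := by
    rw [show ((Real.sqrt L : ℂ))⁻¹ * ((Real.sqrt ((n:ℝ)/L) : ℝ) : ℂ)
        = (((Real.sqrt L)⁻¹ * Real.sqrt ((n:ℝ)/L) : ℝ) : ℂ) by push_cast; ring, hconst_r,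
      Complex.ofReal_div]
  rw [hconstC, phi]
  have hB : Complex.exp (Complex.I * ((-(lamK L m) : ℝ) : ℂ) * (((d : ℝ) * (L / n) : ℝ) : ℂ))
      = Complex.exp (Complex.I * ((-(lamK L m) : ℝ) : ℂ) * ((((d : ℝ) + 1) * (L / n) : ℝ) : ℂ)) *
        Complex.exp (Complex.I * (L : ℂ) * ((lamK L m : ℝ) : ℂ) / (n : ℂ)) := by
    rw [← Complex.exp_add]
    congr 1
    push_cast
    ring
  rw [hB]
  have hA : Complex.exp (Complex.I * ((-(lamK L m) : ℝ) : ℂ) * ((((d : ℝ) + 1) * (L / n) : ℝ) : ℂ))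
      = Complex.exp (-Complex.I * (L : ℂ) * ((d.val + 1 : ℕ) : ℂ) * ((lamK L m : ℝ) : ℂ) / (n : ℂ)) := by
    congr 1
    push_cast
    ring
  rw [hA]
  have hlg : ((lamK L m : ℝ) : ℂ) - ((kbox L n x1 : ℝ) : ℂ) ≠ 0 := by
    rw [← Complex.ofReal_sub]
    exact Complex.ofReal_ne_zero.mpr (sub_ne_zero.mpr (StmtAux.lamK_ne_kbox hL n m x1))
  have hrC : ((r : ℝ) : ℂ) = ((kbox L n x1 : ℝ) : ℂ) - ((lamK L m : ℝ) : ℂ) := by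
    rw [hrdef]; push_cast; ring
  rw [hrC]
  have hgl : ((kbox L n x1 : ℝ) : ℂ) - ((lamK L m : ℝ) : ℂ) ≠ 0 := fun h => hlg (by
    linear_combination -h)
  have hL0 : (L : ℂ) ≠ 0 := Complex.ofReal_ne_zero.mpr hL.ne'
  field_simp
  try simp only [Complex.I_sq, Complex.I_mul_I]
  try ring
  try ring_nf
  try simp only [Complex.I_sq, Complex.I_mul_I]
  try ring

/-! ### Completeness via Fourier theory on circles -/

open MeasureTheory in
lemma ae_zero_of_coeffs {T a : ℝ} (hT : 0 < T) {g : ℝ → ℂ}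
    (hg : MemLp g 2 (volume.restrict (Set.Ioc a (a + T))))
    (h : ∀ m : ℤ, ∫ x in Set.Ioc a (a + T),
        Complex.exp (2 * (π : ℂ) * Complex.I * (m : ℂ) * (x : ℂ) / (T : ℂ)) * g x = 0) :
    g =ᵐ[volume.restrict (Set.Ioc a (a + T))] 0 := by
  haveI : Fact (0 < T) := ⟨hT⟩
  set g' := hg.1.mk g with hg'def
  have hg'sm : StronglyMeasurable g' := hg.1.stronglyMeasurable_mk
  have hgg' : g =ᵐ[volume.restrict (Set.Ioc a (a + T))] g' := hg.1.ae_eq_mk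
  set G : AddCircle T → ℂ := AddCircle.liftIoc T a g' with hGdef
  have hGmeas : Measurable G :=
    hg'sm.measurable.comp (measurable_subtype_coe.comp (AddCircle.measurableEquivIoc (T := T) a).measurable)
  have hmk : MeasurePreserving (fun x : ℝ => (x : AddCircle T))
      (volume.restrict (Set.Ioc a (a + T))) volume := AddCircle.measurePreserving_mk T a
  have hcomp : (fun x : ℝ => G (x : AddCircle T)) =ᵐ[volume.restrict (Set.Ioc a (a + T))] g' := by
    filter_upwards [ae_restrict_mem measurableSet_Ioc] with x hx
    exact AddCircle.liftIoc_coe_apply hx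
  have hGvol : MemLp G 2 (volume : Measure (AddCircle T)) := by
    refine ⟨hGmeas.aestronglyMeasurable, ?_⟩
    rw [← eLpNorm_comp_measurePreserving hGmeas.aestronglyMeasurable hmk,
      eLpNorm_congr_ae (show (G ∘ fun x : ℝ => (x : AddCircle T))
        =ᵐ[volume.restrict (Set.Ioc a (a + T))] g' from hcomp)]
    exact (hg.ae_eq hgg').2
  have hofT : (ENNReal.ofReal T) ≠ 0 := (ENNReal.ofReal_pos.2 hT).ne'
  have hGh : MemLp G 2 (AddCircle.haarAddCircle) := by
    have h1 : (AddCircle.haarAddCircle : Measure (AddCircle T))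
        = (ENNReal.ofReal T)⁻¹ • (volume : Measure (AddCircle T)) := by
      rw [AddCircle.volume_eq_smul_haarAddCircle, smul_smul,
        ENNReal.inv_mul_cancel hofT ENNReal.ofReal_ne_top, one_smul]
    rw [h1]
    exact hGvol.smul_measure (ENNReal.inv_ne_top.2 hofT)
  set Gz := hGh.toLp G with hGzdef
  have hco : ∀ m : ℤ, fourierCoeff (⇑Gz) m = 0 := by
    intro m
    have e1 : fourierCoeff (⇑Gz) m = fourierCoeff G m := by
      unfold fourierCoeff
      exact integral_congr_ae ((hGh.coeFn_toLp).mono fun x hx => by dsimp only; rw [hx])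
    rw [e1, hGdef, fourierCoeff_liftIoc_eq, fourierCoeffOn_eq_integral]
    have e2 : (∫ x in a..(a + T), (fourier (-m) (x : AddCircle (a + T - a))) • g' x) = 0 := by
      rw [intervalIntegral.integral_of_le (by linarith : a ≤ a + T)]
      have e3 : ∫ x in Set.Ioc a (a + T), (fourier (-m) (x : AddCircle (a + T - a))) • g' x =
          ∫ x in Set.Ioc a (a + T),
            Complex.exp (2 * (π : ℂ) * Complex.I * ((-m : ℤ) : ℂ) * (x : ℂ) / (T : ℂ)) * g x := by
        apply integral_congr_ae
        filter_upwards [hgg'] with x hx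
        rw [← hx, fourier_coe_apply, smul_eq_mul,
          show ((a + T - a : ℝ) : ℂ) = (T : ℂ) by push_cast; ring]
      rw [e3]
      have := h (-m)
      push_cast at this ⊢
      exact this
    rw [e2, smul_zero]
  have hGz0 : Gz = 0 := by
    apply fourierBasis.repr.injective
    rw [map_zero]
    apply lp.ext
    funext m
    rw [fourierBasis_repr, hco m, lp.coeFn_zero, Pi.zero_apply]
  have hG0 : G =ᵐ[(AddCircle.haarAddCircle : Measure (AddCircle T))] 0 := by
    have h1 : ⇑Gz =ᵐ[AddCircle.haarAddCircle] G := hGh.coeFn_toLp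
    have h2 : ⇑Gz =ᵐ[AddCircle.haarAddCircle] 0 := by
      rw [hGz0]; exact Lp.coeFn_zero ℂ 2 _
    exact h1.symm.trans h2
  have hGvol0 : G =ᵐ[(volume : Measure (AddCircle T))] 0 := by
    rw [AddCircle.volume_eq_smul_haarAddCircle]
    exact Measure.ae_smul_measure hG0 _
  have hpull : (fun x : ℝ => G (x : AddCircle T)) =ᵐ[volume.restrict (Set.Ioc a (a + T))]
      (0 : ℝ → ℂ) := by
    have h4 : G ∘ (fun x : ℝ => (x : AddCircle T))
        =ᵐ[volume.restrict (Set.Ioc a (a + T))] (0 : AddCircle T → ℂ) ∘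
          (fun x : ℝ => (x : AddCircle T)) :=
      ae_eq_comp hmk.aemeasurable (hmk.map_eq.symm ▸ hGvol0)
    exact h4
  exact hgg'.trans (hcomp.symm.trans hpull)

/-! ### The two families span -/

open MeasureTheory in
lemma span_u_orth {L : ℝ} (hL : 0 < L) :
    (Submodule.span ℂ (Set.range (uLp L)))ᗮ = ⊥ := by
  rw [Submodule.eq_bot_iff]
  intro g hg
  have h0 : ∀ m : ℤ, (⟪uLp L m, g⟫ : ℂ) = 0 := fun m =>
    (Submodule.mem_orthogonal _ g).1 hg (uLp L m) (Submodule.subset_span ⟨m, rfl⟩)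
  have hsL : ((Real.sqrt L : ℂ))⁻¹ ≠ 0 :=
    inv_ne_zero (Complex.ofReal_ne_zero.2 (by positivity))
  have hint : ∀ m : ℤ, ∫ x in Set.Ioc (0:ℝ) L,
      Complex.exp (Complex.I * ((-(lamK L m) : ℝ) : ℂ) * (x:ℂ)) * g x = 0 := by
    intro m
    have h1 := h0 m
    rw [uLp, inner_toLp_left] at h1
    have h2 : ∫ x in Set.Ioc (0:ℝ) L, (starRingEnd ℂ) (ufun L m x) * g x =
        ((Real.sqrt L : ℂ))⁻¹ * ∫ x in Set.Ioc (0:ℝ) L,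
          Complex.exp (Complex.I * ((-(lamK L m) : ℝ):ℂ) * (x:ℂ)) * g x := by
      rw [← MeasureTheory.integral_const_mul]
      apply integral_congr_ae
      filter_upwards with x
      rw [ufun, map_mul, map_inv₀, Complex.conj_ofReal, StmtAux.conj_exp_I_mul]
      ring
    rw [h2] at h1
    exact (mul_eq_zero.1 h1).resolve_left hsL
  set g2 : ℝ → ℂ := fun x => Complex.exp (Complex.I * ((-(π/L) : ℝ) : ℂ) * (x:ℂ)) * g x
    with hg2def
  have hg2 : MemLp g2 2 (volume.restrict (Set.Ioc (0:ℝ) L)) := by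
    refine (Lp.memLp g).congr_norm ?_ ?_
    · exact (Continuous.aestronglyMeasurable (by fun_prop)).mul (Lp.aestronglyMeasurable g)
    · filter_upwards with x
      rw [hg2def]
      dsimp only
      rw [norm_mul, StmtAux.norm_exp_I_mul, one_mul]
  have hg2' : MemLp g2 2 (volume.restrict (Set.Ioc (0:ℝ) (0 + L))) := by
    rwa [zero_add]
  have hcoef : ∀ m : ℤ, ∫ x in Set.Ioc (0:ℝ) (0 + L),
      Complex.exp (2*(π:ℂ)*Complex.I*(m:ℂ)*(x:ℂ)/(L:ℂ)) * g2 x = 0 := by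
    intro m
    rw [zero_add]
    have h3 : ∀ x : ℝ, Complex.exp (2*(π:ℂ)*Complex.I*(m:ℂ)*(x:ℂ)/(L:ℂ)) * g2 x =
        Complex.exp (Complex.I * ((-(lamK L (-m)) : ℝ) : ℂ) * (x:ℂ)) * g x := by
      intro x
      rw [hg2def]
      dsimp only
      rw [← mul_assoc, ← Complex.exp_add]
      congr 2
      rw [lamK]
      push_cast
      ring
    rw [MeasureTheory.integral_congr_ae (Filter.Eventually.of_forall h3)]
    exact hint (-m)
  have hae := ae_zero_of_coeffs hL hg2' hcoef
  rw [zero_add] at hae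
  have hgz : ⇑g =ᵐ[volume.restrict (Set.Ioc (0:ℝ) L)] 0 := by
    refine hae.mono fun x hx => ?_
    have hx' : Complex.exp (Complex.I * ((-(π/L) : ℝ) : ℂ) * (x:ℂ)) * g x = 0 := hx
    exact (mul_eq_zero.1 hx').resolve_left (Complex.exp_ne_zero _)
  exact Lp.ext (hgz.trans (Lp.coeFn_zero ℂ 2 _).symm)

lemma Ioc_union {L : ℝ} (hL : 0 < L) {n : ℕ} (hn : 1 ≤ n) :
    Set.Ioc (0:ℝ) L = ⋃ d : Fin n, Set.Ioc ((d:ℝ)*(L/n)) (((d:ℝ)+1)*(L/n)) := by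
  have hn0 : (0:ℝ) < n := by exact_mod_cast Nat.pos_of_ne_zero (by omega)
  apply Set.Subset.antisymm
  · intro x hx
    obtain ⟨hx0, hxL⟩ := hx
    set k : ℕ := ⌈x * n / L⌉₊ with hk
    have hk1 : 1 ≤ k := Nat.ceil_pos.2 (by positivity)
    have hkn : k ≤ n := Nat.ceil_le.2 (by
      rw [div_le_iff₀ hL]
      nlinarith)
    rw [Set.mem_iUnion]
    refine ⟨⟨k - 1, by omega⟩, ?_, ?_⟩
    · have h1 : ((k - 1 : ℕ) : ℝ) < x * n / L := Nat.lt_ceil.mp (by omega)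
      have h2 : ((⟨k - 1, by omega⟩ : Fin n) : ℝ) = ((k - 1 : ℕ) : ℝ) := rfl
      rw [h2]
      calc ((k - 1 : ℕ) : ℝ) * (L / n) < (x * n / L) * (L / n) := by
            exact mul_lt_mul_of_pos_right h1 (by positivity)
        _ = x := by field_simp
    · have h2 : x * n / L ≤ (k : ℝ) := Nat.le_ceil _
      have h3 : ((⟨k - 1, by omega⟩ : Fin n) : ℝ) + 1 = (k : ℝ) := by
        have : ((k - 1 : ℕ) : ℝ) = (k : ℝ) - 1 := by
          rw [Nat.cast_sub hk1]; norm_num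
        show ((k - 1 : ℕ) : ℝ) + 1 = (k : ℝ)
        rw [this]; ring
      rw [h3]
      calc x = (x * n / L) * (L / n) := by field_simp
        _ ≤ (k : ℝ) * (L / n) := mul_le_mul_of_nonneg_right h2 (by positivity)
  · intro x hx
    rw [Set.mem_iUnion] at hx
    obtain ⟨d, hd⟩ := hx
    exact piece_subset hL hn d hd

open MeasureTheory in
lemma span_f_orth {L : ℝ} (hL : 0 < L) {n : ℕ} (hn : 1 ≤ n) :
    (Submodule.span ℂ (Set.range (fLp L n)))ᗮ = ⊥ := by
  have hn0 : (0:ℝ) < n := by exact_mod_cast Nat.pos_of_ne_zero (by omega)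
  rw [Submodule.eq_bot_iff]
  intro g hg
  have h0 : ∀ x : ℤ × Fin n, (⟪fLp L n x, g⟫ : ℂ) = 0 := fun x =>
    (Submodule.mem_orthogonal _ g).1 hg (fLp L n x) (Submodule.subset_span ⟨x, rfl⟩)
  have key : ∀ d : Fin n,
      ⇑g =ᵐ[volume.restrict (Set.Ioc ((d:ℝ)*(L/n)) (((d:ℝ)+1)*(L/n)))] 0 := by
    intro d
    have hTn : (0:ℝ) < L/n := by positivity
    have hgm : MemLp (⇑g) 2 (volume.restrict
        (Set.Ioc ((d:ℝ)*(L/n)) ((d:ℝ)*(L/n) + L/n))) := by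
      have h1 := (Lp.memLp g).restrict (Set.Ioc ((d:ℝ)*(L/n)) (((d:ℝ)+1)*(L/n)))
      rw [Measure.restrict_restrict measurableSet_Ioc,
        Set.inter_eq_left.mpr (piece_subset hL hn d)] at h1
      rwa [show (d:ℝ)*(L/n) + L/n = ((d:ℝ)+1)*(L/n) by ring]
    have hco : ∀ m : ℤ, ∫ x in Set.Ioc ((d:ℝ)*(L/n)) ((d:ℝ)*(L/n) + L/n),
        Complex.exp (2*(π:ℂ)*Complex.I*(m:ℂ)*(x:ℂ)/((L/n : ℝ):ℂ)) * g x = 0 := by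
      intro m
      have h1 := h0 (-m, d)
      rw [fLp, inner_toLp_left] at h1
      have h2 : ∀ x : ℝ, (starRingEnd ℂ) (ffun L n (-m, d) x) * g x =
          (Set.Ioc ((d:ℝ)*(L/n)) (((d:ℝ)+1)*(L/n))).indicator
            (fun x => (Real.sqrt ((n:ℝ)/L) : ℂ) *
              (Complex.exp (Complex.I * ((-(kbox L n (-m)) : ℝ):ℂ) * (x:ℂ)) * g x)) x := by
        intro x
        rw [ffun]
        by_cases hx : x ∈ Set.Ioc ((d:ℝ)*(L/n)) (((d:ℝ)+1)*(L/n))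
        · rw [Set.indicator_of_mem hx, Set.indicator_of_mem hx, map_mul, Complex.conj_ofReal,
            StmtAux.conj_exp_I_mul]
          ring
        · rw [Set.indicator_of_notMem hx, Set.indicator_of_notMem hx, map_zero, zero_mul]
      simp only [h2] at h1
      rw [integral_indicator measurableSet_Ioc, Measure.restrict_restrict measurableSet_Ioc,
        Set.inter_eq_left.mpr (piece_subset hL hn d), MeasureTheory.integral_const_mul] at h1
      have h3 := (mul_eq_zero.1 h1).resolve_left
        (Complex.ofReal_ne_zero.2 (by positivity : Real.sqrt ((n:ℝ)/L) ≠ 0))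
      have h4 : ∀ x : ℝ, Complex.exp (2*(π:ℂ)*Complex.I*(m:ℂ)*(x:ℂ)/((L/n : ℝ):ℂ)) * g x =
          Complex.exp (Complex.I * ((-(kbox L n (-m)) : ℝ):ℂ) * (x:ℂ)) * g x := by
        intro x
        have hnC : ((n:ℝ) : ℂ) ≠ 0 := Complex.ofReal_ne_zero.2 hn0.ne'
        have hLC : ((L : ℝ) : ℂ) ≠ 0 := Complex.ofReal_ne_zero.2 hL.ne'
        congr 2
        rw [kbox]
        push_cast
        field_simp
      rw [show (d:ℝ)*(L/n) + L/n = ((d:ℝ)+1)*(L/n) by ring,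
        MeasureTheory.integral_congr_ae (Filter.Eventually.of_forall h4)]
      exact h3
    have hres := ae_zero_of_coeffs hTn hgm hco
    rwa [show (d:ℝ)*(L/n) + L/n = ((d:ℝ)+1)*(L/n) by ring] at hres
  have hgz : ⇑g =ᵐ[volume.restrict (Set.Ioc (0:ℝ) L)] 0 := by
    have h5 := (MeasureTheory.ae_restrict_iUnion_iff
      (fun d : Fin n => Set.Ioc ((d:ℝ)*(L/n)) (((d:ℝ)+1)*(L/n)))
      (fun x => (⇑g) x = (0 : ℝ → ℂ) x)).2 fun d => key d
    rwa [← Ioc_union hL hn] at h5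
  exact Lp.ext (hgz.trans (Lp.coeFn_zero ℂ 2 _).symm)

/-! ### Hilbert bases and the composition law -/

/-- The antiperiodic exponentials form a Hilbert basis of `L²((0,L])`. -/
noncomputable def uBasis {L : ℝ} (hL : 0 < L) :
    HilbertBasis ℤ ℂ (MeasureTheory.Lp ℂ 2 (MeasureTheory.volume.restrict (Set.Ioc (0:ℝ) L))) :=
  HilbertBasis.mkOfOrthogonalEqBot (orthonormal_iff_ite.2 (inner_u_u hL)) (span_u_orth hL)

/-- The box states form a Hilbert basis of `L²((0,L])`. -/
noncomputable def fBasis {L : ℝ} (hL : 0 < L) {n : ℕ} (hn : 1 ≤ n) :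
    HilbertBasis (ℤ × Fin n) ℂ
      (MeasureTheory.Lp ℂ 2 (MeasureTheory.volume.restrict (Set.Ioc (0:ℝ) L))) :=
  HilbertBasis.mkOfOrthogonalEqBot (orthonormal_iff_ite.2 (inner_f_f hL hn)) (span_f_orth hL hn)

lemma uBasis_apply {L : ℝ} (hL : 0 < L) (m : ℤ) : uBasis hL m = uLp L m :=
  congrFun (HilbertBasis.coe_mkOfOrthogonalEqBot _ _) m

lemma fBasis_apply {L : ℝ} (hL : 0 < L) {n : ℕ} (hn : 1 ≤ n) (x : ℤ × Fin n) :
    fBasis hL hn x = fLp L n x :=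
  congrFun (HilbertBasis.coe_mkOfOrthogonalEqBot _ _) x

lemma uBasis_repr_f {L : ℝ} (hL : 0 < L) {n : ℕ} (hn : 1 ≤ n) (x : ℤ × Fin n) (m : ℤ) :
    (uBasis hL).repr (fLp L n x) m = phi L n (lamK L m) (kbox L n x.1) (x.2.val + 1) := by
  rw [HilbertBasis.repr_apply_apply, uBasis_apply hL m]
  exact inner_u_f hL hn m x

lemma memlp_mul_exp {c : ℤ → ℂ} (hc : Memℓp c 2) (e : ℤ → ℂ) (he : ∀ m, ‖e m‖ = 1) :
    Memℓp (fun m => c m * e m) 2 := by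
  have h2 : (0:ℝ) < (2:ℝ≥0∞).toReal := by norm_num
  have hs := (memℓp_gen_iff h2).1 hc
  apply memℓp_gen
  refine hs.congr fun m => ?_
  rw [norm_mul, he m, mul_one]

lemma norm_exp_sq (s l : ℝ) : ‖Complex.exp (Complex.I * (s:ℂ) * ((l:ℝ):ℂ)^2)‖ = 1 := by
  rw [show ((l:ℝ):ℂ)^2 = ((l^2 : ℝ) : ℂ) by push_cast; ring]
  exact StmtAux.norm_exp_I_mul s (l^2)

lemma norm_exp_sq' (s l : ℝ) : ‖Complex.exp (-Complex.I * (s:ℂ) * ((l:ℝ):ℂ)^2)‖ = 1 := by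
  rw [show -Complex.I * (s:ℂ) * ((l:ℝ):ℂ)^2 = Complex.I * ((-s : ℝ):ℂ) * ((l^2:ℝ):ℂ) by
    push_cast; ring]
  exact StmtAux.norm_exp_I_mul (-s) (l^2)

lemma conj_exp_sq (s l : ℝ) :
    (starRingEnd ℂ) (Complex.exp (Complex.I * (s:ℂ) * ((l:ℝ):ℂ)^2)) =
      Complex.exp (-Complex.I * (s:ℂ) * ((l:ℝ):ℂ)^2) := by
  rw [← Complex.exp_conj]
  congr 1
  rw [map_mul, map_mul, Complex.conj_I, Complex.conj_ofReal, map_pow, Complex.conj_ofReal]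
  try ring

lemma exp_sq_add (s t l : ℝ) :
    Complex.exp (-Complex.I * (s:ℂ) * ((l:ℝ):ℂ)^2) *
      Complex.exp (-Complex.I * (t:ℂ) * ((l:ℝ):ℂ)^2) =
    Complex.exp (-Complex.I * ((s + t : ℝ):ℂ) * ((l:ℝ):ℂ)^2) := by
  rw [← Complex.exp_add]
  congr 1
  push_cast
  ring

open MeasureTheory in
lemma Gt_comp {L : ℝ} (hL : 0 < L) {n : ℕ} (hn : 1 ≤ n) (s t : ℝ) (A B : ℤ × Fin n) :
    (∑' x : ℤ × Fin n,
        Gt L n s (kbox L n A.1) (A.2.val + 1) (kbox L n x.1) (x.2.val + 1) *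
          Gt L n t (kbox L n x.1) (x.2.val + 1) (kbox L n B.1) (B.2.val + 1))
      = Gt L n (s + t) (kbox L n A.1) (A.2.val + 1) (kbox L n B.1) (B.2.val + 1) := by
  have hcmem : Memℓp (fun m => (uBasis hL).repr (fLp L n A) m *
      Complex.exp (Complex.I * (s:ℂ) * ((lamK L m : ℝ):ℂ)^2)) 2 :=
    memlp_mul_exp (lp.memℓp ((uBasis hL).repr (fLp L n A))) _ (fun m => norm_exp_sq s _)
  have hdmem : Memℓp (fun m => (uBasis hL).repr (fLp L n B) m *
      Complex.exp (-Complex.I * (t:ℂ) * ((lamK L m : ℝ):ℂ)^2)) 2 :=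
    memlp_mul_exp (lp.memℓp ((uBasis hL).repr (fLp L n B))) _ (fun m => norm_exp_sq' t _)
  set cl : lp (fun _ : ℤ => ℂ) 2 := ⟨_, hcmem⟩ with hcl
  set dl : lp (fun _ : ℤ => ℂ) 2 := ⟨_, hdmem⟩ with hdl
  set u := (uBasis hL).repr.symm cl with hu
  set v := (uBasis hL).repr.symm dl with hv
  have hru : (uBasis hL).repr u = cl := (uBasis hL).repr.apply_symm_apply cl
  have hrv : (uBasis hL).repr v = dl := (uBasis hL).repr.apply_symm_apply dl
  have hG1 : ∀ x : ℤ × Fin n,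
      Gt L n s (kbox L n A.1) (A.2.val + 1) (kbox L n x.1) (x.2.val + 1)
        = ⟪u, fBasis hL hn x⟫ := by
    intro x
    rw [← LinearIsometryEquiv.inner_map_map (uBasis hL).repr u (fBasis hL hn x), hru,
      lp.inner_eq_tsum, Gt]
    apply tsum_congr
    intro m
    rw [RCLike.inner_apply]
    have hclm : cl m = (uBasis hL).repr (fLp L n A) m *
        Complex.exp (Complex.I * (s:ℂ) * ((lamK L m : ℝ):ℂ)^2) := rfl
    rw [hclm, fBasis_apply hL hn x, uBasis_repr_f hL hn A m, uBasis_repr_f hL hn x m,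
      map_mul, conj_exp_sq]
    ring
  have hG2 : ∀ x : ℤ × Fin n,
      Gt L n t (kbox L n x.1) (x.2.val + 1) (kbox L n B.1) (B.2.val + 1)
        = ⟪fBasis hL hn x, v⟫ := by
    intro x
    rw [← LinearIsometryEquiv.inner_map_map (uBasis hL).repr (fBasis hL hn x) v, hrv,
      lp.inner_eq_tsum, Gt]
    apply tsum_congr
    intro m
    rw [RCLike.inner_apply]
    have hdlm : dl m = (uBasis hL).repr (fLp L n B) m *
        Complex.exp (-Complex.I * (t:ℂ) * ((lamK L m : ℝ):ℂ)^2) := rfl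
    rw [hdlm, fBasis_apply hL hn x, uBasis_repr_f hL hn B m, uBasis_repr_f hL hn x m]
    ring
  calc (∑' x : ℤ × Fin n,
        Gt L n s (kbox L n A.1) (A.2.val + 1) (kbox L n x.1) (x.2.val + 1) *
          Gt L n t (kbox L n x.1) (x.2.val + 1) (kbox L n B.1) (B.2.val + 1))
      = ∑' x : ℤ × Fin n, ⟪u, fBasis hL hn x⟫ * ⟪fBasis hL hn x, v⟫ :=
        tsum_congr fun x => by rw [hG1 x, hG2 x]
    _ = ⟪u, v⟫ := (fBasis hL hn).tsum_inner_mul_inner u v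
    _ = Gt L n (s + t) (kbox L n A.1) (A.2.val + 1) (kbox L n B.1) (B.2.val + 1) := by
        rw [← LinearIsometryEquiv.inner_map_map (uBasis hL).repr u v, hru, hrv,
          lp.inner_eq_tsum, Gt]
        apply tsum_congr
        intro m
        rw [RCLike.inner_apply]
        have hclm : cl m = (uBasis hL).repr (fLp L n A) m *
            Complex.exp (Complex.I * (s:ℂ) * ((lamK L m : ℝ):ℂ)^2) := rfl
        have hdlm : dl m = (uBasis hL).repr (fLp L n B) m *
            Complex.exp (-Complex.I * (t:ℂ) * ((lamK L m : ℝ):ℂ)^2) := rfl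
        rw [hclm, hdlm, uBasis_repr_f hL hn A m, uBasis_repr_f hL hn B m,
          map_mul, conj_exp_sq, ← exp_sq_add s t (lamK L m)]
        ring
  done

open MeasureTheory in
lemma Gt_zero {L : ℝ} (hL : 0 < L) {n : ℕ} (hn : 1 ≤ n) (A B : ℤ × Fin n) :
    Gt L n 0 (kbox L n A.1) (A.2.val + 1) (kbox L n B.1) (B.2.val + 1)
      = if A = B then (1:ℂ) else 0 := by
  rw [Gt]
  calc (∑' m : ℤ, (starRingEnd ℂ) (phi L n (lamK L m) (kbox L n A.1) (A.2.val + 1)) *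
          phi L n (lamK L m) (kbox L n B.1) (B.2.val + 1) *
          Complex.exp (-Complex.I * ((0:ℝ):ℂ) * ((lamK L m : ℝ):ℂ)^2))
      = ∑' m : ℤ, ⟪fLp L n A, uBasis hL m⟫ * ⟪uBasis hL m, fLp L n B⟫ := by
        apply tsum_congr
        intro m
        rw [show ((0:ℝ):ℂ) = 0 from Complex.ofReal_zero, mul_zero, zero_mul, Complex.exp_zero,
          mul_one]
        rw [← uBasis_repr_f hL hn A m, ← uBasis_repr_f hL hn B m,
          HilbertBasis.repr_apply_apply, HilbertBasis.repr_apply_apply, inner_conj_symm]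
    _ = ⟪fLp L n A, fLp L n B⟫ := (uBasis hL).tsum_inner_mul_inner _ _
    _ = if A = B then (1:ℂ) else 0 := inner_f_f hL hn A B

end StmtAux

/-- Group composition law for the Green's functions: `G_s G_t = G_{s+t}`, and in
particular `G_t G_{−t} = δ`, i.e. `G_{−t}` is the inverse of `G_t`. -/
theorem stmt7 (L : ℝ) (hL : 0 < L) (n : ℕ) (hn : 1 ≤ n) (s t : ℝ)
    (p q : ℤ) (b c : Fin n) :
    (∑' x : ℤ × Fin n,
        Gt L n s (kbox L n p) (b.val + 1) (kbox L n x.1) (x.2.val + 1) *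
          Gt L n t (kbox L n x.1) (x.2.val + 1) (kbox L n q) (c.val + 1)
      = Gt L n (s + t) (kbox L n p) (b.val + 1) (kbox L n q) (c.val + 1))
    ∧ (∑' x : ℤ × Fin n,
        Gt L n t (kbox L n p) (b.val + 1) (kbox L n x.1) (x.2.val + 1) *
          Gt L n (-t) (kbox L n x.1) (x.2.val + 1) (kbox L n q) (c.val + 1)
      = if p = q ∧ b = c then 1 else 0) := by
  constructor
  · exact StmtAux.Gt_comp hL hn s t (p, b) (q, c)
  · have h := StmtAux.Gt_comp hL hn t (-t) (p, b) (q, c)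
    rw [add_neg_cancel] at h
    rw [h, StmtAux.Gt_zero hL hn (p, b) (q, c)]
    simp only [Prod.mk.injEq]
end StmtAux
end

section
/- Trotter product convergence for bounded generators: if A(s) and B(s) are bounded operator-valued, piecewise continuous in s on [0,t], then the time-ordered product ∏_{m=1}^{T} e^{−i(t/T)A(mt/T)} e^{−i(t/T)B(mt/T)} converges in operator norm as T → ∞ to the time-ordered exponential 𝒯exp(−i∫_0^t (A(s)+B(s)) ds), i.e. to the solution U(t) of U'(t) = −i(A(t)+B(t))U(t), U(0) = I. -/
/-
Lady Windermere's fan: the error `U t - P_T * U 0` of the `T`-step product telescopes into `T`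
local errors, each propagated by a product of Trotter steps. A step `exp (τ A) * exp (τ B)` has
norm at most `exp (L |τ|)` (stability), so propagation costs at most `exp (L |t|)`; and each local
error is `o(|τ|)` uniformly on `[0, t]` (consistency), because `(X, Y) ↦ exp X * exp Y` has
derivative `X + Y` at `0`, while `U s' = U s + (s' - s) • (A s' + B s') * U s + o(|s' - s|)` by
uniform continuity of `(p, q) ↦ (A p + B p) * U q`. Hence the total error is `T · o(1/T) → 0`.
-/

open Filter NormedSpace Topology Set

theorem natCast_mul_div_mem_uIcc (t : ℝ) {k T : ℕ} (hk : k ≤ T) : (k * t / T : ℝ) ∈ uIcc 0 t := by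
  have hθ : (k / T : ℝ) ∈ uIcc 0 1 := by
    rw [uIcc_of_le zero_le_one]
    exact ⟨by positivity, div_le_one_of_le₀ (by exact_mod_cast hk) (by positivity)⟩
  have := mem_image_of_mem (· * t) hθ
  rwa [image_mul_const_uIcc, zero_mul, one_mul, div_mul_eq_mul_div₀] at this

section OneStepMethods

variable {𝔸 : Type*} [NormedRing 𝔸]

theorem norm_sub_prod_mul_le (G u : ℕ → 𝔸) {c ε : ℝ} (hc : 1 ≤ c) {n : ℕ}
    (hG : ∀ k < n, ‖G k‖ ≤ c) (hu : ∀ k < n, ‖u (k + 1) - G k * u k‖ ≤ ε) :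
    ‖u n - ((List.range n).reverse.map G).prod * u 0‖ ≤ n * c ^ n * ε := by
  induction n with
  | zero => simp
  | succ n ih =>
    have hε : 0 ≤ ε := (norm_nonneg _).trans (hu n n.lt_succ_self)
    set P := ((List.range n).reverse.map G).prod
    have hsplit : u (n + 1) - ((List.range (n + 1)).reverse.map G).prod * u 0
        = (u (n + 1) - G n * u n) + G n * (u n - P * u 0) := by
      simp only [List.range_succ, List.reverse_append, List.reverse_singleton,
        List.singleton_append, List.map_cons, List.prod_cons, P]
      noncomm_ring
    calc _ ≤ ‖u (n + 1) - G n * u n‖ + ‖G n‖ * ‖u n - P * u 0‖ := by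
          rw [hsplit]; exact norm_add_le_of_le le_rfl (norm_mul_le _ _)
      _ ≤ ε + c * (n * c ^ n * ε) := by
          gcongr
          · exact hu n n.lt_succ_self
          · exact hG n n.lt_succ_self
          · exact ih (fun k hk => hG k (by omega)) (fun k hk => hu k (by omega))
      _ = ε + n * c ^ (n + 1) * ε := by ring
      _ ≤ c ^ (n + 1) * ε + n * c ^ (n + 1) * ε := by
          gcongr; exact le_mul_of_one_le_left hε (one_le_pow₀ hc)
      _ = (n + 1 : ℕ) * c ^ (n + 1) * ε := by push_cast; ring

theorem tendsto_prod_mul_of_stable_of_consistent {U : ℝ → 𝔸} {G : ℝ → ℝ → 𝔸} {t L : ℝ}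
    (hL : 0 ≤ L)
    (hstab : ∃ δ > 0, ∀ τ, ∀ s ∈ uIcc 0 t, |τ| ≤ δ → ‖G τ s‖ ≤ Real.exp (L * |τ|))
    (hcons : ∀ η > 0, ∃ δ > 0, ∀ s ∈ uIcc 0 t, ∀ s' ∈ uIcc 0 t, |s' - s| ≤ δ →
      ‖U s' - G (s' - s) s' * U s‖ ≤ η * |s' - s|) :
    Tendsto (fun T : ℕ =>
        ((List.range T).reverse.map fun k : ℕ => G (t / T) (((k : ℝ) + 1) * t / T)).prod * U 0)
      atTop (𝓝 (U t)) := by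
  set C := Real.exp (L * |t|) * |t|
  rw [Metric.tendsto_atTop]
  intro ε hε
  obtain ⟨δ₀, hδ₀, hG⟩ := hstab
  obtain ⟨δ, hδ, hU⟩ := hcons (ε / (C + 1)) (by positivity)
  obtain ⟨N, hN⟩ := exists_nat_gt (|t| / min δ₀ δ)
  refine ⟨N + 1, fun T hNT => ?_⟩
  have hT : (0 : ℝ) < T := by exact_mod_cast (show 0 < T by omega)
  have hτ : |t / T| ≤ min δ₀ δ := by
    rw [abs_div, Nat.abs_cast, div_le_iff₀ hT, mul_comm, ← div_le_iff₀ (by positivity)]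
    exact hN.le.trans (by exact_mod_cast (show N ≤ T by omega))
  set s : ℕ → ℝ := fun k => k * t / T
  have hs : ∀ k ≤ T, s k ∈ uIcc 0 t := fun k hk => natCast_mul_div_mem_uIcc t hk
  have hds : ∀ k, s (k + 1) - s k = t / T := fun k => by simp only [s]; push_cast; ring
  have key := norm_sub_prod_mul_le (fun k => G (t / T) (s (k + 1))) (fun k => U (s k))
    (c := Real.exp (L * |t / T|)) (ε := ε / (C + 1) * |t / T|) (n := T)
    (Real.one_le_exp (by positivity))
    (fun k hk => hG _ _ (hs _ hk) (hτ.trans (min_le_left _ _)))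
    (fun k hk => by
      simpa only [hds] using hU _ (hs k hk.le) _ (hs (k + 1) hk)
        ((hds k).symm ▸ hτ.trans (min_le_right _ _)))
  have hsT : s T = t := by simp only [s]; field_simp
  have hs0 : s 0 = 0 := by simp [s]
  rw [hsT, hs0] at key
  rw [dist_comm, dist_eq_norm]
  calc _ ≤ _ := by simpa only [s, Nat.cast_add, Nat.cast_one] using key
    _ = C * (ε / (C + 1)) := by
      rw [← Real.exp_nat_mul, abs_div, Nat.abs_cast]
      field_simp
      ring
    _ < ε := by
      rw [mul_div_assoc', div_lt_iff₀ (by positivity)]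
      nlinarith

end OneStepMethods

theorem exists_norm_sub_sub_smul_le {F : Type*} [NormedAddCommGroup F] [NormedSpace ℝ F]
    {K : Set ℝ} (hK : IsCompact K) [K.OrdConnected] {u : ℝ → F} {g : ℝ × ℝ → F}
    (hg : ContinuousOn g (K ×ˢ K)) (hu : ∀ s ∈ K, HasDerivWithinAt u (g (s, s)) K s)
    {η : ℝ} (hη : 0 < η) :
    ∃ δ > 0, ∀ s ∈ K, ∀ s' ∈ K, |s' - s| ≤ δ →
      ‖u s' - u s - (s' - s) • g (s', s)‖ ≤ η * |s' - s| := by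
  obtain ⟨δ, hδ, hgδ⟩ :=
    Metric.uniformContinuousOn_iff.mp ((hK.prod hK).uniformContinuousOn_of_continuous hg) η hη
  refine ⟨δ / 2, by positivity, fun s hs s' hs' hss' => ?_⟩
  have hsub : uIcc s s' ⊆ K := OrdConnected.uIcc_subset ‹_› hs hs'
  have hderiv : ∀ σ ∈ uIcc s s', HasDerivWithinAt (fun σ => u σ - σ • g (s', s))
      (g (σ, σ) - g (s', s)) (uIcc s s') σ := fun σ hσ => by
    simpa using ((hu σ (hsub hσ)).mono hsub).fun_sub
      ((hasDerivWithinAt_id σ _).smul_const (g (s', s)))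
  have hbound : ∀ σ ∈ uIcc s s', ‖g (σ, σ) - g (s', s)‖ ≤ η := fun σ hσ => by
    rw [← dist_eq_norm]
    refine (hgδ _ (mk_mem_prod (hsub hσ) (hsub hσ)) _ (mk_mem_prod hs' hs) ?_).le
    rw [Prod.dist_eq, Real.dist_eq, Real.dist_eq, abs_sub_comm σ s']
    exact (max_le (abs_sub_right_of_mem_uIcc hσ) (abs_sub_left_of_mem_uIcc hσ)).trans_lt
      (by linarith)
  have := (convex_uIcc s s').norm_image_sub_le_of_norm_hasDerivWithin_le hderiv hbound
    left_mem_uIcc right_mem_uIcc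
  rwa [Real.norm_eq_abs, sub_sub_sub_comm, ← sub_smul] at this

section TrotterStep

variable {𝔸 : Type*} [NormedRing 𝔸]

theorem hasFDerivAt_exp_mul_exp_zero (𝕂 : Type*) [RCLike 𝕂] [NormedAlgebra 𝕂 𝔸] [CompleteSpace 𝔸] :
    HasFDerivAt (fun p : 𝔸 × 𝔸 => exp p.1 * exp p.2)
      (ContinuousLinearMap.fst 𝕂 𝔸 𝔸 + ContinuousLinearMap.snd 𝕂 𝔸 𝔸) 0 := by
  have hfst : HasFDerivAt (fun p : 𝔸 × 𝔸 => exp p.1)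
      ((1 : 𝔸 →L[𝕂] 𝔸).comp (ContinuousLinearMap.fst 𝕂 𝔸 𝔸)) 0 :=
    HasFDerivAt.comp (f := Prod.fst) (0 : 𝔸 × 𝔸) hasFDerivAt_exp_zero hasFDerivAt_fst
  have hsnd : HasFDerivAt (fun p : 𝔸 × 𝔸 => exp p.2)
      ((1 : 𝔸 →L[𝕂] 𝔸).comp (ContinuousLinearMap.snd 𝕂 𝔸 𝔸)) 0 :=
    HasFDerivAt.comp (f := Prod.snd) (0 : 𝔸 × 𝔸) hasFDerivAt_exp_zero hasFDerivAt_snd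
  refine (hfst.mul' hsnd).congr_fderiv ?_
  ext p <;> simp

variable [NormedAlgebra ℝ 𝔸] [CompleteSpace 𝔸]

theorem exists_norm_exp_mul_exp_sub_le {η : ℝ} (hη : 0 < η) :
    ∃ δ > 0, ∀ X Y : 𝔸, ‖X‖ < δ → ‖Y‖ < δ →
      ‖exp X * exp Y - 1 - (X + Y)‖ ≤ η * max ‖X‖ ‖Y‖ := by
  obtain ⟨δ, hδ, h⟩ := Metric.eventually_nhds_iff.mp
    ((hasFDerivAt_iff_isLittleO_nhds_zero.mp (hasFDerivAt_exp_mul_exp_zero (𝔸 := 𝔸) ℝ)).def hη)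
  refine ⟨δ, hδ, fun X Y hX hY => ?_⟩
  simpa [Prod.norm_def] using h (y := (X, Y)) (by simpa [Prod.dist_eq] using ⟨hX, hY⟩)

theorem exists_norm_exp_mul_exp_le (h1 : ‖(1 : 𝔸)‖ ≤ 1) :
    ∃ δ > 0, ∀ X Y : 𝔸, ‖X‖ < δ → ‖Y‖ < δ → ‖exp X * exp Y‖ ≤ Real.exp (3 * max ‖X‖ ‖Y‖) := by
  obtain ⟨δ, hδ, h⟩ := exists_norm_exp_mul_exp_sub_le (𝔸 := 𝔸) one_pos
  refine ⟨δ, hδ, fun X Y hX hY => ?_⟩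
  have hXY : ‖X + Y‖ ≤ 2 * max ‖X‖ ‖Y‖ :=
    (norm_add_le X Y).trans (by linarith [le_max_left ‖X‖ ‖Y‖, le_max_right ‖X‖ ‖Y‖])
  calc ‖exp X * exp Y‖ = ‖(exp X * exp Y - 1 - (X + Y)) + 1 + (X + Y)‖ := by abel_nf
    _ ≤ 1 * max ‖X‖ ‖Y‖ + 1 + 2 * max ‖X‖ ‖Y‖ :=
      norm_add₃_le.trans (add_le_add_three (h X Y hX hY) h1 hXY)
    _ ≤ Real.exp (3 * max ‖X‖ ‖Y‖) := by linarith [Real.add_one_le_exp (3 * max ‖X‖ ‖Y‖)]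

variable {K : Set ℝ} {A B U : ℝ → 𝔸}

theorem exists_norm_exp_smul_mul_exp_smul_le (h1 : ‖(1 : 𝔸)‖ ≤ 1) (hK : IsCompact K)
    (hA : ContinuousOn A K) (hB : ContinuousOn B K) :
    ∃ L ≥ 0, ∃ δ > 0, ∀ τ : ℝ, ∀ s ∈ K, |τ| ≤ δ →
      ‖exp (τ • A s) * exp (τ • B s)‖ ≤ Real.exp (L * |τ|) := by
  obtain ⟨M₀, hM₀⟩ := hK.exists_bound_of_continuousOn (hA.prodMk hB)
  set M := max M₀ 1
  have hM : 0 < M := lt_max_of_lt_right one_pos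
  obtain ⟨δ, hδ, h⟩ := exists_norm_exp_mul_exp_le h1
  refine ⟨3 * M, by positivity, δ / (2 * M), by positivity, fun τ s hs hτ => ?_⟩
  have hτM : M * |τ| < δ := by
    rw [le_div_iff₀ (by positivity)] at hτ
    nlinarith
  have hAB : max ‖τ • A s‖ ‖τ • B s‖ ≤ M * |τ| := by
    rw [norm_smul, norm_smul, Real.norm_eq_abs, ← mul_max_of_nonneg _ _ (abs_nonneg τ), mul_comm]
    exact mul_le_mul_of_nonneg_right ((hM₀ s hs).trans (le_max_left _ _)) (abs_nonneg τ)
  calc _ ≤ Real.exp (3 * max ‖τ • A s‖ ‖τ • B s‖) :=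
        h _ _ ((le_max_left _ _).trans hAB |>.trans_lt hτM)
          ((le_max_right _ _).trans hAB |>.trans_lt hτM)
    _ ≤ Real.exp (3 * M * |τ|) := Real.exp_le_exp.mpr (by linarith)

theorem exists_norm_sub_exp_smul_mul_exp_smul_mul_le (hK : IsCompact K) [K.OrdConnected]
    (hA : ContinuousOn A K) (hB : ContinuousOn B K)
    (hU : ∀ s ∈ K, HasDerivWithinAt U ((A s + B s) * U s) K s) {η : ℝ} (hη : 0 < η) :
    ∃ δ > 0, ∀ s ∈ K, ∀ s' ∈ K, |s' - s| ≤ δ →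
      ‖U s' - exp ((s' - s) • A s') * exp ((s' - s) • B s') * U s‖ ≤ η * |s' - s| := by
  have hUc : ContinuousOn U K := fun s hs => (hU s hs).continuousWithinAt
  obtain ⟨M₀, hM₀⟩ := hK.exists_bound_of_continuousOn (hA.prodMk (hB.prodMk hUc))
  set M := max M₀ 1
  have hM : 0 < M := lt_max_of_lt_right one_pos
  have hbound : ∀ s ∈ K, ‖A s‖ ≤ M ∧ ‖B s‖ ≤ M ∧ ‖U s‖ ≤ M := fun s hs => by
    have := (hM₀ s hs).trans (le_max_left M₀ 1)
    simp only [Prod.norm_def, max_le_iff] at this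
    exact this
  have hg : ContinuousOn (fun p : ℝ × ℝ => (A p.1 + B p.1) * U p.2) (K ×ˢ K) :=
    ((hA.comp continuousOn_fst fun _ hp => hp.1).add
      (hB.comp continuousOn_fst fun _ hp => hp.1)).mul (hUc.comp continuousOn_snd fun _ hp => hp.2)
  obtain ⟨δ₁, hδ₁, hTaylor⟩ := exists_norm_sub_sub_smul_le hK hg hU (half_pos hη)
  obtain ⟨δ₂, hδ₂, hexp⟩ := exists_norm_exp_mul_exp_sub_le (𝔸 := 𝔸) (η := η / (2 * M ^ 2))
    (by positivity)
  refine ⟨min δ₁ (δ₂ / (2 * M)), by positivity, fun s hs s' hs' hss' => ?_⟩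
  set τ := s' - s
  obtain ⟨hAs, hBs, -⟩ := hbound s' hs'
  have hUs := (hbound s hs).2.2
  have hτM : M * |τ| < δ₂ := by
    have := hss'.trans (min_le_right _ _)
    rw [le_div_iff₀ (by positivity)] at this
    nlinarith
  have hAB : max ‖τ • A s'‖ ‖τ • B s'‖ ≤ M * |τ| := by
    rw [norm_smul, norm_smul, Real.norm_eq_abs, ← mul_max_of_nonneg _ _ (abs_nonneg τ), mul_comm]
    exact mul_le_mul_of_nonneg_right (max_le hAs hBs) (abs_nonneg τ)
  have hsplit : U s' - exp (τ • A s') * exp (τ • B s') * U s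
      = (U s' - U s - τ • ((A s' + B s') * U s))
        - (exp (τ • A s') * exp (τ • B s') - 1 - (τ • A s' + τ • B s')) * U s := by
    rw [← smul_add, ← smul_mul_assoc]
    noncomm_ring
  calc _ ≤ η / 2 * |τ| + η / (2 * M ^ 2) * (M * |τ|) * M := by
        rw [hsplit]
        refine norm_sub_le_of_le (hTaylor s hs s' hs' (hss'.trans (min_le_left _ _)))
          ((norm_mul_le _ _).trans (mul_le_mul ?_ hUs (norm_nonneg _) (by positivity)))
        exact (hexp _ _ ((le_max_left _ _).trans hAB |>.trans_lt hτM)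
          ((le_max_right _ _).trans hAB |>.trans_lt hτM)).trans (by gcongr)
    _ = η * |τ| := by field_simp; ring

end TrotterStep

theorem tendsto_trotter_prod_mul {𝔸 : Type*} [NormedRing 𝔸] [NormedAlgebra ℝ 𝔸] [CompleteSpace 𝔸]
    (h1 : ‖(1 : 𝔸)‖ ≤ 1) (t : ℝ) {A B U : ℝ → 𝔸} (hA : ContinuousOn A (uIcc 0 t))
    (hB : ContinuousOn B (uIcc 0 t))
    (hU : ∀ s ∈ uIcc 0 t, HasDerivWithinAt U ((A s + B s) * U s) (uIcc 0 t) s) :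
    Tendsto (fun T : ℕ =>
        ((List.range T).reverse.map fun k : ℕ =>
          exp ((t / T) • A (((k : ℝ) + 1) * t / T)) *
            exp ((t / T) • B (((k : ℝ) + 1) * t / T))).prod * U 0)
      atTop (𝓝 (U t)) := by
  obtain ⟨L, hL, hstab⟩ := exists_norm_exp_smul_mul_exp_smul_le h1 isCompact_uIcc hA hB
  exact tendsto_prod_mul_of_stable_of_consistent (G := fun τ s => exp (τ • A s) * exp (τ • B s))
    hL hstab fun η hη => exists_norm_sub_exp_smul_mul_exp_smul_mul_le isCompact_uIcc hA hB hU hη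

/-- Trotter product convergence for bounded generators: the time-ordered
product `∏_{m=1}^{T} e^{−i(t/T)A(mt/T)} e^{−i(t/T)B(mt/T)}` (factor `m = T`
leftmost) converges in operator norm as `T → ∞` to the time-ordered exponential
`𝒯exp(−i∫_0^t (A(s)+B(s)) ds)`, i.e. to the solution `U` of
`U' = −i(A+B)U`, `U(0) = 1`, evaluated at `t`. -/
theorem stmt16 {E : Type*} [NormedAddCommGroup E] [NormedSpace ℂ E] [CompleteSpace E]
    (t : ℝ) (A B : ℝ → E →L[ℂ] E) (hA : Continuous A) (hB : Continuous B)
    (U : ℝ → E →L[ℂ] E) (hU0 : U 0 = 1)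
    (hU : ∀ s : ℝ, HasDerivAt U ((-Complex.I) • ((A s + B s).comp (U s))) s) :
    Tendsto (fun T : ℕ =>
        List.prod ((List.range T).reverse.map (fun k =>
          NormedSpace.exp ((-Complex.I * ((t : ℂ) / (T : ℂ))) • A (((k : ℝ) + 1) * t / T)) *
            NormedSpace.exp ((-Complex.I * ((t : ℂ) / (T : ℂ))) • B (((k : ℝ) + 1) * t / T)))))
      atTop (nhds (U t)) := by
  have hsmul : ∀ (T : ℕ) (X : E →L[ℂ] E),
      (-Complex.I * ((t : ℂ) / (T : ℂ))) • X = (t / T : ℝ) • ((-Complex.I) • X) := fun T X => by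
    rw [← Complex.coe_smul, smul_smul]
    push_cast
    ring_nf
  have key := tendsto_trotter_prod_mul ContinuousLinearMap.norm_id_le t
    (A := fun s => (-Complex.I) • A s) (B := fun s => (-Complex.I) • B s) (U := U)
    (by fun_prop : Continuous fun s => (-Complex.I) • A s).continuousOn
    (by fun_prop : Continuous fun s => (-Complex.I) • B s).continuousOn
    fun s _ => by rw [← smul_add, smul_mul_assoc]; exact (hU s).hasDerivWithinAt
  -- the statement maps over `(List.range T).reverse` pushed into `List ℝ` by the list monad
  simp only [List.pure_def, List.bind_eq_flatMap, ← List.map_eq_flatMap, List.map_map, hsmul]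
  simpa only [hU0, mul_one, Function.comp_def] using key
end
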